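/- arXiv:1210.2893 — 11 statements merged into one kernel-verified Lean document; each statement's English description precedes it below -/
import Mathlib

section
/- If M is a radical module (Rad M = M), then M is Rad-supplementing: for every module N containing M, there exists a submodule V of N such that M + V = N and M ∩ V ⊆ Rad V. -/
universe u v

/-- The radical of a module: the intersection of all maximal submodules. -/
def moduleRad (R : Type u) [Ring R] (M : Type v) [AddCommGroup M] [Module R M] :
    Submodule R M :=
  sInf {m : Submodule R M | IsCoatom m}

/-- `V` is a Rad-supplement of `U` in the ambient module: `U + V = ⊤` and
`U ⊓ V ≤ Rad V` (viewed inside the ambient module). -/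
def IsRadSupplementOf (R : Type u) [Ring R] {N : Type v} [AddCommGroup N] [Module R N]
    (U V : Submodule R N) : Prop :=
  U ⊔ V = ⊤ ∧ U ⊓ V ≤ Submodule.map V.subtype (moduleRad R V)

/-- `M` is Rad-supplementing: in every module containing it (i.e. every embedding into a
module `N`), its image has a Rad-supplement. -/
def IsRadSupplementing (R : Type u) [Ring R] (M : Type v) [AddCommGroup M] [Module R M] :
    Prop :=
  ∀ (N : ModuleCat.{v} R) (f : M →ₗ[R] N), Function.Injective f →
    ∃ V : Submodule R N, IsRadSupplementOf R (LinearMap.range f) V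

/-- Linear maps send the radical into the radical. -/
theorem map_moduleRad_le (R : Type u) [Ring R] {M : Type v} {N : Type v}
    [AddCommGroup M] [Module R M] [AddCommGroup N] [Module R N] (g : M →ₗ[R] N) :
    Submodule.map g (moduleRad R M) ≤ moduleRad R N := by
  rw [Submodule.map_le_iff_le_comap]
  intro x hx
  rw [Submodule.mem_comap]
  refine Submodule.mem_sInf.mpr fun m hm => ?_
  rw [moduleRad, Submodule.mem_sInf] at hx
  by_cases htop : Submodule.comap g m = ⊤
  · have : x ∈ Submodule.comap g m := htop ▸ Submodule.mem_top
    exact this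
  · refine hx (Submodule.comap g m) ⟨htop, ?_⟩
    intro b hb
    obtain ⟨y, hyb, hym⟩ := SetLike.exists_of_lt hb
    rw [Submodule.mem_comap] at hym
    rw [eq_top_iff]
    intro z _
    have hsup : m ⊔ Submodule.span R {g y} = ⊤ :=
      hm.2 _ (lt_of_le_of_ne le_sup_left (by
        intro heq
        exact hym (heq ▸ (le_sup_right : _ ≤ m ⊔ Submodule.span R {g y}) (Submodule.mem_span_singleton_self (g y)))))
    have hz : g z ∈ m ⊔ Submodule.span R {g y} := hsup ▸ Submodule.mem_top
    obtain ⟨u, hu, w, hw, huw⟩ := Submodule.mem_sup.mp hz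
    obtain ⟨r, hr⟩ := Submodule.mem_span_singleton.mp hw
    have : z - r • y ∈ Submodule.comap g m := by
      rw [Submodule.mem_comap, map_sub, map_smul, hr]
      have : g z - w = u := by rw [← huw]; abel
      exact this ▸ hu
    have hzb : z - r • y ∈ b := hb.le this
    have : (z - r • y) + r • y ∈ b := b.add_mem hzb (b.smul_mem r hyb)
    simpa using this

/-- Every radical module (`Rad M = M`) is Rad-supplementing. -/
theorem radical_module_isRadSupplementing
    (R : Type u) [Ring R] (M : Type v) [AddCommGroup M] [Module R M]
    (h : moduleRad R M = ⊤) : IsRadSupplementing R M := by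
  intro N f _
  refine ⟨⊤, by simp, ?_⟩
  intro x hx
  -- x ∈ range f; show x ∈ map ⊤.subtype (moduleRad R ⊤)
  obtain ⟨y, hy⟩ := hx.1
  let g : M →ₗ[R] (⊤ : Submodule R N) := f.codRestrict ⊤ (fun _ => Submodule.mem_top)
  have hg : (⟨x, Submodule.mem_top⟩ : (⊤ : Submodule R N)) ∈
      Submodule.map g (moduleRad R M) := ⟨y, h ▸ Submodule.mem_top, by
        apply Subtype.ext; simpa [g] using hy⟩
  have := map_moduleRad_le R g hg
  exact ⟨⟨x, Submodule.mem_top⟩, this, rfl⟩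
end

section
/- Every direct summand of a Rad-supplementing module is Rad-supplementing. -/
universe u v

/-!
Let `M = A ⊕ B` be Rad-supplementing and `f : A → N` an embedding. Then `f ⊕ id` embeds `M`
into `N × B` with image `f(A) × B`, which therefore has a Rad-supplement `V`. Projecting onto
`N` keeps the sum equal to everything, and since the kernel `0 × B` of the projection lies in
`f(A) × B`, the intersection `f(A) ∩ π(V)` is the image of `(f(A) × B) ∩ V ≤ Rad V`, hence lies
in `π(Rad V) ≤ Rad π(V)`.
-/

section

variable {R : Type u} [Ring R] {N : Type v} {N' : Type*}
  [AddCommGroup N] [Module R N] [AddCommGroup N'] [Module R N']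

theorem map_moduleRad_le_s2 (f : N →ₗ[R] N') : (moduleRad R N).map f ≤ moduleRad R N' :=
  Module.map_jacobson_le f

theorem map_map_subtype_moduleRad_le (π : N →ₗ[R] N') (V : Submodule R N) :
    ((moduleRad R V).map V.subtype).map π ≤ (moduleRad R (V.map π)).map (V.map π).subtype := by
  have hcomp : π ∘ₗ V.subtype = (V.map π).subtype ∘ₗ π.submoduleMap V := rfl
  rw [← Submodule.map_comp, hcomp, Submodule.map_comp]
  exact Submodule.map_mono (map_moduleRad_le_s2 _)

theorem IsRadSupplementOf.map {U V : Submodule R N} (h : IsRadSupplementOf R U V)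
    (π : N →ₗ[R] N') (hπ : Function.Surjective π) (hker : LinearMap.ker π ≤ U) :
    IsRadSupplementOf R (U.map π) (V.map π) := by
  refine ⟨by rw [← Submodule.map_sup, h.1, Submodule.map_top, LinearMap.range_eq_top.2 hπ], ?_⟩
  rintro _ ⟨⟨u, hu, rfl⟩, v, hv, hvu⟩
  have hvU : v ∈ U := by
    have hdiff : v - u ∈ U := hker (LinearMap.mem_ker.2 (by rw [map_sub, hvu, sub_self]))
    simpa using U.add_mem hdiff hu
  rw [← hvu]
  exact map_map_subtype_moduleRad_le π V (Submodule.mem_map_of_mem (h.2 ⟨hvU, hv⟩))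

end

theorem IsRadSupplementOf.map_fst {R : Type u} [Ring R] {N : Type v} {B : Type*}
    [AddCommGroup N] [Module R N] [AddCommGroup B] [Module R B] {U : Submodule R N}
    {V : Submodule R (N × B)} (h : IsRadSupplementOf R (U.prod ⊤) V) :
    IsRadSupplementOf R U (V.map (LinearMap.fst R N B)) := by
  have hker : LinearMap.ker (LinearMap.fst R N B) ≤ U.prod ⊤ :=
    Submodule.comap_fst (R := R) (M₂ := B) U ▸ Submodule.comap_mono bot_le
  simpa using h.map _ LinearMap.fst_surjective hker

/-- Every direct summand of a Rad-supplementing module is Rad-supplementing. -/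
theorem directSummand_isRadSupplementing
    (R : Type u) [Ring R] (M : Type v) [AddCommGroup M] [Module R M]
    (hM : IsRadSupplementing R M) (A B : Submodule R M) (hAB : IsCompl A B) :
    IsRadSupplementing R A := by
  intro N f hf
  let e : M ≃ₗ[R] A × B := (Submodule.prodEquivOfIsCompl A B hAB).symm
  let g : M →ₗ[R] N × B := f.prodMap LinearMap.id ∘ₗ e.toLinearMap
  have hg : Function.Injective g :=
    (hf.prodMap Function.injective_id).comp e.injective
  have hrange : LinearMap.range g = (LinearMap.range f).prod ⊤ := by
    simp [g, LinearMap.range_comp_of_range_eq_top _ e.range]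
  obtain ⟨V, hV⟩ := hM (ModuleCat.of R (N × B)) g hg
  exact ⟨_, (hrange ▸ hV).map_fst⟩
end

section
/- Let B be a module and A a submodule of B. If A and B/A are Rad-supplementing, then B is Rad-supplementing. -/
universe u v

section helpers
variable {R : Type u} [Ring R] {M : Type v} {M₂ : Type v}
  [AddCommGroup M] [Module R M] [AddCommGroup M₂] [Module R M₂]

lemma mem_moduleRad {x : M} :
    x ∈ moduleRad R M ↔ ∀ m : Submodule R M, IsCoatom m → x ∈ m := by
  simp [moduleRad, Submodule.mem_sInf, Set.mem_setOf_eq]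

lemma isCoatom_comap_of_surjective {f : M →ₗ[R] M₂} (hf : Function.Surjective f)
    {m' : Submodule R M₂} (hm' : IsCoatom m') : IsCoatom (m'.comap f) := by
  constructor
  · intro h
    apply hm'.1
    rw [eq_top_iff, ← LinearMap.range_eq_top.mpr hf, LinearMap.range_eq_map,
      ← h, Submodule.map_comap_eq_of_surjective hf]
  · intro b hb
    have h1 : m' ≤ Submodule.map f b := by
      rw [← Submodule.map_comap_eq_of_surjective hf m']
      exact Submodule.map_mono hb.le
    have h2 : m' ≠ Submodule.map f b := by
      intro h
      have : b ≤ m'.comap f := by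
        rw [h]; exact Submodule.le_comap_map f b
      exact hb.not_ge this
    have := hm'.2 _ (lt_of_le_of_ne h1 h2)
    have hker : LinearMap.ker f ≤ b := le_trans (by
      intro x hx
      simp only [Submodule.mem_comap, LinearMap.mem_ker.mp hx]
      exact m'.zero_mem) hb.le
    rw [eq_top_iff, ← Submodule.comap_map_eq_self hker, this, Submodule.comap_top]

lemma isCoatom_map_of_surjective {f : M →ₗ[R] M₂} (hf : Function.Surjective f)
    {m : Submodule R M} (hker : LinearMap.ker f ≤ m) (hm : IsCoatom m) :
    IsCoatom (m.map f) := by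
  constructor
  · intro h
    apply hm.1
    rw [eq_top_iff, ← Submodule.comap_map_eq_self hker, h, Submodule.comap_top]
  · intro b' hb'
    have h1 : m ≤ b'.comap f := by
      rw [← Submodule.comap_map_eq_self hker]
      exact Submodule.comap_mono hb'.le
    have h2 : m ≠ b'.comap f := by
      intro h
      have : b' ≤ m.map f := by
        rw [h, Submodule.map_comap_eq_of_surjective hf]
      exact hb'.not_ge this
    have := hm.2 _ (lt_of_le_of_ne h1 h2)
    rw [eq_top_iff, ← Submodule.map_comap_eq_of_surjective hf b', this,
      Submodule.map_top, LinearMap.range_eq_top.mpr hf]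

lemma moduleRad_map_equiv (e : M ≃ₗ[R] M₂) :
    Submodule.map (e : M →ₗ[R] M₂) (moduleRad R M) = moduleRad R M₂ := by
  apply le_antisymm
  · rintro _ ⟨x, hx, rfl⟩
    rw [mem_moduleRad]
    intro m' hm'
    have : x ∈ m'.comap (e : M →ₗ[R] M₂) :=
      mem_moduleRad.mp hx _ (isCoatom_comap_of_surjective e.surjective hm')
    exact this
  · intro y hy
    refine ⟨e.symm y, ?_, by simp⟩
    rw [SetLike.mem_coe, mem_moduleRad]
    intro m hm
    have : y ∈ m.comap (e.symm : M₂ →ₗ[R] M) :=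
      mem_moduleRad.mp hy _ (isCoatom_comap_of_surjective e.symm.surjective hm)
    exact this

lemma moduleRad_quotient (K : Submodule R M) (hK : K ≤ moduleRad R M) :
    Submodule.map K.mkQ (moduleRad R M) = moduleRad R (M ⧸ K) := by
  have hsurj : Function.Surjective K.mkQ := K.mkQ_surjective
  apply le_antisymm
  · rintro _ ⟨x, hx, rfl⟩
    rw [mem_moduleRad]
    intro m' hm'
    exact mem_moduleRad.mp hx _ (isCoatom_comap_of_surjective hsurj hm')
  · intro y hy
    obtain ⟨x, rfl⟩ := hsurj y
    refine ⟨x, ?_, rfl⟩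
    rw [SetLike.mem_coe, mem_moduleRad]
    intro m hm
    have hKm : K ≤ m := le_trans hK (sInf_le hm)
    have hker : LinearMap.ker K.mkQ ≤ m := by rwa [Submodule.ker_mkQ]
    have : K.mkQ x ∈ m.map K.mkQ :=
      mem_moduleRad.mp hy _ (isCoatom_map_of_surjective hsurj hker hm)
    obtain ⟨z, hz, hzx⟩ := this
    have : x - z ∈ K := by
      rw [← Submodule.ker_mkQ K, LinearMap.mem_ker, map_sub, hzx, sub_self]
    have := m.add_mem (hKm this) hz
    simpa using this

end helpers

/-- If `A ⊆ B` with `A` and `B/A` Rad-supplementing, then `B` is Rad-supplementing. -/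
theorem isRadSupplementing_of_submodule_and_quotient
    (R : Type u) [Ring R] (B : Type v) [AddCommGroup B] [Module R B]
    (A : Submodule R B) (hA : IsRadSupplementing R A)
    (hBA : IsRadSupplementing R (B ⧸ A)) : IsRadSupplementing R B := by
  intro N f hf
  set A' : Submodule R N := A.map f with hA'def
  have hAle : A ≤ Submodule.comap f A' := Submodule.le_comap_map f A
  let g : (B ⧸ A) →ₗ[R] (↥N ⧸ A') := Submodule.mapQ A A' f hAle
  have hginj : Function.Injective g := by
    rw [← LinearMap.ker_eq_bot, eq_bot_iff]
    intro y hy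
    obtain ⟨x, rfl⟩ := A.mkQ_surjective y
    rw [LinearMap.mem_ker, Submodule.mkQ_apply, Submodule.mapQ_apply,
      Submodule.Quotient.mk_eq_zero] at hy
    obtain ⟨a, ha, hax⟩ := hy
    have : x ∈ A := by rwa [← hf hax]
    simpa [Submodule.mkQ_apply, Submodule.Quotient.mk_eq_zero] using this
  obtain ⟨V₁, hV₁sup, hV₁rad⟩ := hBA (ModuleCat.of R (↥N ⧸ A')) g hginj
  have hrg : LinearMap.range g = Submodule.map A'.mkQ (LinearMap.range f) := by
    have hcomp : g.comp A.mkQ = A'.mkQ.comp f := by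
      ext x
      simp [g, Submodule.mapQ_apply]
    have h1 : LinearMap.range (g.comp A.mkQ) = LinearMap.range g := by
      rw [LinearMap.range_comp, Submodule.range_mkQ, Submodule.map_top]
    rw [← h1, hcomp, LinearMap.range_comp]
  set V : Submodule R ↥N := V₁.comap A'.mkQ with hVdef
  have hA'V : A' ≤ V := by
    intro x hx
    show A'.mkQ x ∈ V₁
    rw [Submodule.mkQ_apply, (Submodule.Quotient.mk_eq_zero A').mpr hx]
    exact V₁.zero_mem
  have hmapV : Submodule.map A'.mkQ V = V₁ :=
    Submodule.map_comap_eq_of_surjective A'.mkQ_surjective V₁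
  have hsup1 : LinearMap.range f ⊔ V = ⊤ := by
    have h1 : Submodule.map A'.mkQ (LinearMap.range f ⊔ V) = ⊤ := by
      rw [Submodule.map_sup, hmapV, ← hrg, hV₁sup]
    have h2 : LinearMap.ker A'.mkQ ≤ LinearMap.range f ⊔ V := by
      rw [Submodule.ker_mkQ]
      exact le_trans hA'V le_sup_right
    rw [← Submodule.comap_map_eq_self h2, h1, Submodule.comap_top]
  have hfA : ∀ a : A, (f.comp A.subtype) a ∈ V := fun a => hA'V ⟨a, a.2, rfl⟩
  let h : A →ₗ[R] V := LinearMap.codRestrict V (f.comp A.subtype) hfA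
  have hhinj : Function.Injective h := by
    intro a b hab
    have : f (A.subtype a) = f (A.subtype b) := congrArg Subtype.val hab
    exact Subtype.ext (hf this)
  obtain ⟨W₁, hW₁sup, hW₁rad⟩ := hA (ModuleCat.of R V) h hhinj
  set W : Submodule R ↥N := W₁.map V.subtype with hWdef
  have hWleV : W ≤ V := Submodule.map_subtype_le V W₁
  have hrh : Submodule.map V.subtype (LinearMap.range h) = A' := by
    rw [← LinearMap.range_comp, LinearMap.subtype_comp_codRestrict, LinearMap.range_comp,
      Submodule.range_subtype]
  have hsupV : A' ⊔ W = V := by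
    have h1 := congrArg (Submodule.map V.subtype) hW₁sup
    rwa [Submodule.map_sup, hrh, Submodule.map_top, Submodule.range_subtype] at h1
  have hA'f : A' ≤ LinearMap.range f := by
    rintro x ⟨a, _, rfl⟩
    exact ⟨a, rfl⟩
  refine ⟨W, ?_, ?_⟩
  · rw [← hsup1, ← hsupV, ← sup_assoc, sup_eq_left.mpr hA'f]
  -- the radical condition
  have hstep_a : A' ⊓ W ≤ Submodule.map W.subtype (moduleRad R W) := by
    rw [hWdef, ← hrh, ← Submodule.map_inf _ V.injective_subtype]
    rintro _ ⟨y, hy, rfl⟩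
    obtain ⟨w₁, hw₁, hw₁y⟩ := hW₁rad hy
    let e₂ := Submodule.equivMapOfInjective V.subtype V.injective_subtype W₁
    have he₂rad : Submodule.map e₂.toLinearMap (moduleRad R W₁)
        = moduleRad R (Submodule.map V.subtype W₁) := moduleRad_map_equiv e₂
    refine ⟨e₂ w₁, ?_, ?_⟩
    · rw [← he₂rad]
      exact ⟨w₁, hw₁, rfl⟩
    · show ((e₂ w₁ : Submodule.map V.subtype W₁) : ↥N) = V.subtype y
      rw [Submodule.coe_equivMapOfInjective_apply]
      exact congrArg V.subtype hw₁y
  set K₀ : Submodule R W := A'.comap W.subtype with hK₀def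
  have hK₀rad : K₀ ≤ moduleRad R W := by
    intro w hw
    have hx : (w : ↥N) ∈ A' ⊓ W := ⟨hw, w.2⟩
    obtain ⟨u, hu, huw⟩ := hstep_a hx
    have : u = w := Subtype.ext huw
    rwa [← this]
  let φ : W →ₗ[R] (↥N ⧸ A') := A'.mkQ.comp W.subtype
  have hkerφ : LinearMap.ker φ = K₀ := by
    ext w
    simp [φ, K₀, LinearMap.mem_ker, Submodule.mkQ_apply, Submodule.Quotient.mk_eq_zero]
  have hmapW : Submodule.map A'.mkQ W = V₁ := by
    have hbot : Submodule.map A'.mkQ A' = ⊥ := by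
      rw [eq_bot_iff]
      rintro _ ⟨a, ha, rfl⟩
      simpa [Submodule.mkQ_apply, Submodule.Quotient.mk_eq_zero] using ha
    have := congrArg (Submodule.map A'.mkQ) hsupV
    rwa [Submodule.map_sup, hbot, bot_sup_eq, hmapV] at this
  have hrangeφ : LinearMap.range φ = V₁ := by
    rw [LinearMap.range_comp, Submodule.range_subtype]
    exact hmapW
  let φ' : (↥W ⧸ K₀) →ₗ[R] (↥N ⧸ A') := K₀.liftQ φ hkerφ.ge
  have hφ'inj : Function.Injective φ' := by
    rw [← LinearMap.ker_eq_bot]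
    exact Submodule.ker_liftQ_eq_bot _ _ _ hkerφ.le
  have hφ'range : LinearMap.range φ' = V₁ := by
    rw [Submodule.range_liftQ]
    exact hrangeφ
  let e : (↥W ⧸ K₀) ≃ₗ[R] V₁ :=
    (LinearEquiv.ofInjective φ' hφ'inj).trans (LinearEquiv.ofEq _ _ hφ'range)
  have he : ∀ z, V₁.subtype (e z) = φ' z := fun z => rfl
  rintro x ⟨hxf, hxW⟩
  have hxV : x ∈ V := hWleV hxW
  have hb : A'.mkQ x ∈ LinearMap.range g ⊓ V₁ := by
    constructor
    · rw [hrg]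
      exact ⟨x, hxf, rfl⟩
    · exact hxV
  obtain ⟨v₁, hv₁, hv₁x⟩ := hV₁rad hb
  set w : W := ⟨x, hxW⟩ with hwdef
  have hφw : φ' (K₀.mkQ w) = A'.mkQ x := by
    rw [Submodule.mkQ_apply, Submodule.liftQ_apply]
    rfl
  have hew : e (K₀.mkQ w) = v₁ := Subtype.ext
    (show V₁.subtype (e (K₀.mkQ w)) = V₁.subtype v₁ by rw [he, hφw]; exact hv₁x.symm)
  have hmk : K₀.mkQ w ∈ moduleRad R (↥W ⧸ K₀) := by
    have heq := moduleRad_map_equiv e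
    have hv : e (K₀.mkQ w) ∈ Submodule.map (e : (↥W ⧸ K₀) →ₗ[R] V₁) (moduleRad R (↥W ⧸ K₀)) := by
      rw [heq, hew]
      exact hv₁
    obtain ⟨z, hz, hze⟩ := hv
    have : z = K₀.mkQ w := e.injective hze
    rwa [← this]
  rw [← moduleRad_quotient K₀ hK₀rad] at hmk
  obtain ⟨u, hu, hu'⟩ := hmk
  have hsub : w - u ∈ K₀ := by
    rw [← Submodule.ker_mkQ K₀, LinearMap.mem_ker, map_sub, hu', sub_self]
  have hwrad : w ∈ moduleRad R W := by
    have := (moduleRad R W).add_mem (hK₀rad hsub) hu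
    simpa using this
  exact ⟨w, hwrad, rfl⟩
end

section
/- If M₁ and M₂ are Rad-supplementing modules, then M₁ ⊕ M₂ is Rad-supplementing. -/
universe u v

/-- Unfolded, type-level version of `IsRadSupplementing`. -/
lemma isRadSupplementing_elim {R : Type u} [Ring R] {M : Type v} [AddCommGroup M] [Module R M]
    (h : IsRadSupplementing R M) (P : Type v) [AddCommGroup P] [Module R P]
    (f : M →ₗ[R] P) (hf : Function.Injective f) :
    ∃ V : Submodule R P, IsRadSupplementOf R (LinearMap.range f) V :=
  h (ModuleCat.of R P) f hf

/-- Key lemma: if `f : X → Y` is surjective and `ker f ≤ Rad X`, then the preimage of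
`Rad Y` is contained in `Rad X`. -/
lemma moduleRad_lift {R : Type u} [Ring R] {X : Type v} {Y : Type v}
    [AddCommGroup X] [Module R X] [AddCommGroup Y] [Module R Y]
    (f : X →ₗ[R] Y) (hf : Function.Surjective f)
    (hker : LinearMap.ker f ≤ moduleRad R X) {x : X}
    (hx : f x ∈ moduleRad R Y) : x ∈ moduleRad R X := by
  rw [moduleRad, Submodule.mem_sInf]
  intro P hP
  have hkP : LinearMap.ker f ≤ P := hker.trans (sInf_le hP)
  have hcm : Submodule.comap f (Submodule.map f P) = P := by
    rw [Submodule.comap_map_eq, sup_eq_left.2 hkP]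
  have hQ : IsCoatom (Submodule.map f P) := by
    constructor
    · intro h
      apply hP.1
      rw [← hcm, h, Submodule.comap_top]
    · intro b hb
      have h1 : P < Submodule.comap f b := by
        rw [← hcm]
        refine lt_of_le_of_ne (Submodule.comap_mono hb.le) ?_
        intro h
        exact hb.ne (Submodule.comap_injective_of_surjective hf h)
      have h2 : Submodule.comap f b = ⊤ := hP.2 _ h1
      have := Submodule.map_comap_eq_of_surjective hf b
      rw [h2, Submodule.map_top, LinearMap.range_eq_top.2 hf] at this
      exact this.symm
  have hmem : f x ∈ Submodule.map f P := by
    rw [moduleRad, Submodule.mem_sInf] at hx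
    exact hx _ hQ
  have := Submodule.mem_comap.2 hmem
  rwa [hcm] at this

/-- The direct sum of two Rad-supplementing modules is Rad-supplementing. -/
theorem isRadSupplementing_prod
    (R : Type u) [Ring R]
    (M₁ : Type v) [AddCommGroup M₁] [Module R M₁]
    (M₂ : Type v) [AddCommGroup M₂] [Module R M₂]
    (h₁ : IsRadSupplementing R M₁) (h₂ : IsRadSupplementing R M₂) :
    IsRadSupplementing R (M₁ × M₂) := by
  intro N f hf
  set f₁ : M₁ →ₗ[R] N := f ∘ₗ LinearMap.inl R M₁ M₂ with hf₁
  set f₂ : M₂ →ₗ[R] N := f ∘ₗ LinearMap.inr R M₁ M₂ with hf₂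
  set A : Submodule R N := LinearMap.range f₁ with hA
  -- embed M₂ into N ⧸ A
  set g : M₂ →ₗ[R] (↥N ⧸ A) := A.mkQ ∘ₗ f₂ with hg
  have hmkf₁ : ∀ m : M₁, A.mkQ (f₁ m) = 0 := by
    intro m
    rw [Submodule.mkQ_apply, Submodule.Quotient.mk_eq_zero]
    exact LinearMap.mem_range_self f₁ m
  have hginj : Function.Injective g := by
    intro a b hab
    have hab' : A.mkQ (f₂ a - f₂ b) = 0 := by
      rw [map_sub]
      show g a - g b = 0
      rw [hab, sub_self]
    rw [Submodule.mkQ_apply, Submodule.Quotient.mk_eq_zero] at hab'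
    obtain ⟨m, hm⟩ := hab'
    have heq : f (m, 0) = f (0, a - b) := by
      have : f₂ a - f₂ b = f₂ (a - b) := (map_sub f₂ a b).symm
      exact hm.trans this
    have := congrArg Prod.snd (hf heq)
    simpa [sub_eq_zero] using this.symm
  obtain ⟨W, hW1, hW2⟩ := isRadSupplementing_elim h₂ (↥N ⧸ A) g hginj
  set T : Submodule R N := Submodule.comap A.mkQ W with hT
  have hAT : A ≤ T := by
    intro a ha
    show A.mkQ a ∈ W
    have h0 : A.mkQ a = 0 := by
      rw [Submodule.mkQ_apply, Submodule.Quotient.mk_eq_zero]; exact ha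
    rw [h0]; exact W.zero_mem
  -- embed M₁ into T
  set e : M₁ →ₗ[R] T := f₁.codRestrict T (fun m => hAT (LinearMap.mem_range_self f₁ m)) with he
  have heinj : Function.Injective e := by
    intro a b hab
    have h1 : f₁ a = f₁ b := congrArg Subtype.val hab
    have heq : f (a, 0) = f (b, 0) := h1
    exact congrArg Prod.fst (hf heq)
  obtain ⟨V', hV'1, hV'2⟩ := isRadSupplementing_elim h₁ (↥T) e heinj
  set V : Submodule R N := Submodule.map T.subtype V' with hV
  refine ⟨V, ?_, ?_⟩
  · -- range f ⊔ V = ⊤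
    have hTsub : T ≤ A ⊔ V := by
      intro t ht
      have htop : (⟨t, ht⟩ : T) ∈ (⊤ : Submodule R T) := trivial
      rw [← hV'1] at htop
      obtain ⟨a, ha, b, hb, hab⟩ := Submodule.mem_sup.1 htop
      obtain ⟨m, hm⟩ := ha
      have habv : (a : N) + (b : N) = t := by
        have := congrArg Subtype.val hab
        simpa using this
      have hav : (a : N) = f₁ m := (congrArg Subtype.val hm).symm
      have : t = f₁ m + (b : N) := by rw [← habv, hav]
      rw [this]
      exact Submodule.add_mem_sup (LinearMap.mem_range_self f₁ m)
        (Submodule.mem_map_of_mem hb)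
    have hBT : LinearMap.range f₂ ⊔ T = ⊤ := by
      rw [eq_top_iff]
      intro n _
      have htop : A.mkQ n ∈ (⊤ : Submodule R (↥N ⧸ A)) := trivial
      rw [← hW1] at htop
      obtain ⟨a, ha, b, hb, hab⟩ := Submodule.mem_sup.1 htop
      obtain ⟨m, hm⟩ := ha
      have hmem : n - f₂ m ∈ T := by
        show A.mkQ (n - f₂ m) ∈ W
        have : A.mkQ (n - f₂ m) = A.mkQ n - A.mkQ (f₂ m) := map_sub _ _ _
        rw [this, ← hab, show A.mkQ (f₂ m) = a from hm]
        simpa using hb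
      have hsum : n = f₂ m + (n - f₂ m) := by abel
      rw [hsum]
      exact Submodule.add_mem_sup (LinearMap.mem_range_self f₂ m) hmem
    have hA_le : A ≤ LinearMap.range f := by
      rintro _ ⟨m, rfl⟩; exact ⟨(m, 0), rfl⟩
    have hB_le : LinearMap.range f₂ ≤ LinearMap.range f := by
      rintro _ ⟨m, rfl⟩; exact ⟨(0, m), rfl⟩
    rw [eq_top_iff, ← hBT]
    refine sup_le (hB_le.trans le_sup_left) (hTsub.trans (sup_le ?_ le_sup_right))
    exact hA_le.trans le_sup_left
  · -- range f ⊓ V ≤ map V.subtype (moduleRad R V)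
    rintro x ⟨hxM, hxV⟩
    obtain ⟨v, hvV', hvx⟩ := hxV
    -- v : ↥T with hvV' : v ∈ V', hvx : ↑v = x
    -- the surjection φ : V' → W
    have hφmem : ∀ v' : V', A.mkQ (v'.1 : N) ∈ W := fun v' => v'.1.2
    set φ : V' →ₗ[R] W :=
      (A.mkQ ∘ₗ T.subtype ∘ₗ V'.subtype).codRestrict W hφmem with hφ
    have hφval : ∀ v' : V', (φ v' : ↥N ⧸ A) = A.mkQ (v'.1 : N) := fun _ => rfl
    have hφsurj : Function.Surjective φ := by
      rintro ⟨w, hw⟩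
      obtain ⟨n, hn⟩ := Submodule.mkQ_surjective A w
      have hnT : n ∈ T := by show A.mkQ n ∈ W; rw [hn]; exact hw
      have htop : (⟨n, hnT⟩ : T) ∈ (⊤ : Submodule R T) := trivial
      rw [← hV'1] at htop
      obtain ⟨a, ha, b, hb, hab⟩ := Submodule.mem_sup.1 htop
      obtain ⟨m, hm⟩ := ha
      refine ⟨⟨b, hb⟩, ?_⟩
      apply Subtype.ext
      rw [hφval]
      show A.mkQ (b : N) = w
      have habv : (a : N) + (b : N) = n := by
        have := congrArg Subtype.val hab
        simpa using this
      have hav : (a : N) = f₁ m := (congrArg Subtype.val hm).symm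
      have : A.mkQ ((a : N)) + A.mkQ ((b : N)) = A.mkQ n := by
        rw [← map_add, habv]
      rw [hav, hmkf₁ m, zero_add, hn] at this
      exact this
    have hφker : LinearMap.ker φ ≤ moduleRad R V' := by
      intro v' hv'
      have hz : A.mkQ (v'.1 : N) = 0 := by
        have : (φ v' : ↥N ⧸ A) = 0 := by
          rw [show φ v' = 0 from hv']; rfl
        rwa [hφval] at this
      rw [Submodule.mkQ_apply, Submodule.Quotient.mk_eq_zero] at hz
      obtain ⟨m, hm⟩ := hz
      have hrange : (v'.1 : T) ∈ LinearMap.range e := by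
        refine ⟨m, ?_⟩
        apply Subtype.ext
        exact hm
      have hmem2 : (v'.1 : T) ∈ LinearMap.range e ⊓ V' := ⟨hrange, v'.2⟩
      obtain ⟨u, hu, huv⟩ := hV'2 hmem2
      have : u = v' := Subtype.ext huv
      rwa [← this]
    -- x corresponds to ⟨v, hvV'⟩ ∈ V', and φ of it lands in moduleRad W
    have hgx : A.mkQ x ∈ LinearMap.range g := by
      obtain ⟨⟨m₁, m₂⟩, hm⟩ := hxM
      refine ⟨m₂, ?_⟩
      have hxeq : x = f₁ m₁ + f₂ m₂ := by
        rw [← hm, hf₁, hf₂]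
        simp only [LinearMap.comp_apply, LinearMap.inl_apply, LinearMap.inr_apply]
        rw [← map_add]
        norm_num
      have hsum : A.mkQ x = A.mkQ (f₁ m₁) + A.mkQ (f₂ m₂) := by rw [hxeq, map_add]
      rw [hmkf₁ m₁, zero_add] at hsum
      exact hsum.symm
    have hxT : x ∈ T := hvx ▸ v.2
    have hxW : A.mkQ x ∈ W := hxT
    have hφv : φ ⟨v, hvV'⟩ ∈ moduleRad R W := by
      have hmem3 : A.mkQ x ∈ LinearMap.range g ⊓ W := ⟨hgx, hxW⟩
      obtain ⟨w, hw, hwx⟩ := hW2 hmem3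
      have : w = φ ⟨v, hvV'⟩ := by
        apply Subtype.ext
        rw [hφval]
        show (w : ↥N ⧸ A) = A.mkQ (v : N)
        rw [show ((w : ↥N ⧸ A)) = A.mkQ x from hwx]
        exact congrArg A.mkQ hvx.symm
      rwa [← this]
    have hvrad : (⟨v, hvV'⟩ : V') ∈ moduleRad R V' :=
      moduleRad_lift φ hφsurj hφker hφv
    -- transfer along the iso V' ≃ V
    have hTinj : Function.Injective T.subtype := Subtype.val_injective
    set ψ : V' ≃ₗ[R] V := Submodule.equivMapOfInjective T.subtype hTinj V' with hψ
    refine ⟨ψ ⟨v, hvV'⟩, ?_, ?_⟩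
    · apply moduleRad_lift (ψ.symm : V ≃ₗ[R] V').toLinearMap ψ.symm.surjective
      · intro z hz
        have hz0 : z = 0 := by
          have : ψ.symm z = 0 := hz
          exact (LinearEquiv.map_eq_zero_iff ψ.symm).1 this
        rw [hz0]
        exact (moduleRad R V).zero_mem
      · have : ψ.symm (ψ ⟨v, hvV'⟩) = ⟨v, hvV'⟩ := ψ.symm_apply_apply _
        show (ψ.symm : V →ₗ[R] V') (ψ ⟨v, hvV'⟩) ∈ moduleRad R V'
        rw [show ((ψ.symm : V →ₗ[R] V') (ψ ⟨v, hvV'⟩)) = ψ.symm (ψ ⟨v, hvV'⟩) from rfl, this]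
        exact hvrad
    · show ((ψ ⟨v, hvV'⟩ : V) : N) = x
      rw [Submodule.coe_equivMapOfInjective_apply]
      exact hvx
end

section
/- Every module with a composition series (i.e., of finite length) is Rad-supplementing. -/
universe u v

/-- Every module with a composition series (i.e. of finite length) is Rad-supplementing. -/
theorem isRadSupplementing_of_isFiniteLength
    (R : Type u) [Ring R] (M : Type v) [AddCommGroup M] [Module R M]
    (h : IsFiniteLength R M) : IsRadSupplementing R M := by
  intro N f hf
  set U : Submodule R N := LinearMap.range f with hU
  have hart : IsArtinian R M := (isFiniteLength_iff_isNoetherian_isArtinian.mp h).2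
  have hartU : IsArtinian R U := isArtinian_of_linearEquiv (LinearEquiv.ofInjective f hf)
  -- The set of traces of supplements-candidates on U
  set S : Set (Submodule R U) :=
    {W | ∃ V : Submodule R N, U ⊔ V = ⊤ ∧ W = Submodule.comap U.subtype (U ⊓ V)} with hS
  have hne : S.Nonempty := ⟨Submodule.comap U.subtype (U ⊓ ⊤), ⊤, by simp, rfl⟩
  obtain ⟨W, ⟨V, hV, hW⟩, hmin⟩ := wellFounded_lt.has_min S hne
  refine ⟨V, hV, ?_⟩
  rintro x ⟨hxU, hxV⟩
  -- show x ∈ map V.subtype (moduleRad R V)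
  refine ⟨⟨x, hxV⟩, ?_, rfl⟩
  simp only [moduleRad, SetLike.mem_coe, Submodule.mem_sInf]
  intro K hK
  by_contra hxK
  -- K is a coatom of V not containing x; map it down into N
  set V' : Submodule R N := Submodule.map V.subtype K with hV'
  have hxV' : x ∉ V' := by
    rintro ⟨y, hyK, hyx⟩
    have : y = ⟨x, hxV⟩ := Subtype.ext hyx
    exact hxK (this ▸ hyK)
  -- K ⊔ comap (U ⊓ V) = ⊤ in V
  have hKtop : K ⊔ Submodule.comap V.subtype (U ⊓ V) = ⊤ := by
    rcases hK.lt_iff.mp (lt_of_le_of_ne le_sup_left (fun he => hxK (he ▸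
      (Submodule.mem_sup_right (show (⟨x, hxV⟩ : V) ∈ Submodule.comap V.subtype (U ⊓ V) from ⟨hxU, hxV⟩))))) with ht
    exact ht
  have hVle : V ≤ U ⊔ V' := by
    intro z hz
    have : (⟨z, hz⟩ : V) ∈ K ⊔ Submodule.comap V.subtype (U ⊓ V) := hKtop ▸ Submodule.mem_top
    rcases Submodule.mem_sup.mp this with ⟨a, ha, b, hb, hab⟩
    have : z = (V.subtype a) + (V.subtype b) := by
      simpa using congrArg V.subtype hab.symm
    rw [this]
    exact Submodule.add_mem _
      (Submodule.mem_sup_right ⟨a, ha, rfl⟩)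
      (Submodule.mem_sup_left hb.1)
  have hV'top : U ⊔ V' = ⊤ := by
    rw [eq_top_iff, ← hV]
    exact sup_le le_sup_left hVle
  -- strict decrease
  have hle : Submodule.comap U.subtype (U ⊓ V') ≤ W := by
    rw [hW]
    exact Submodule.comap_mono (inf_le_inf_left _ (by
      rintro z ⟨y, _, rfl⟩; exact y.2))
  have hlt : Submodule.comap U.subtype (U ⊓ V') < W := by
    refine lt_of_le_of_ne hle (fun he => ?_)
    have hxW : (⟨x, hxU⟩ : U) ∈ Submodule.comap U.subtype (U ⊓ V') := by
      rw [he, hW]; exact ⟨hxU, hxV⟩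
    exact hxV' hxW.2
  exact hmin _ ⟨V', hV'top, rfl⟩ hlt
end

section
/- Every finitely generated semisimple module is Rad-supplementing. -/
universe u v

/-!
Write the image `U` of `M` as `B ⊕ (U ⊓ Rad N)`. The summand `B` is artinian and meets `Rad N`
trivially, so it has a complement `V` in `N`: as long as `B ≠ 0`, some maximal submodule `m`
does not contain `B`, and a complement of the smaller `B ⊓ m` cut down to `m` is a complement of `B`.
Since `Rad B = 0`, `Rad N = Rad V`; then `U ⊓ V = U ⊓ Rad N ≤ Rad V`.
-/

open Module Submodule

theorem moduleRad_eq_jacobson (R : Type u) [Ring R] (M : Type v) [AddCommGroup M]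
    [Module R M] : moduleRad R M = jacobson R M :=
  rfl

theorem IsCompl.of_isCompl_inf {α : Type*} [Lattice α] [BoundedOrder α] [IsModularLattice α]
    {b m w : α} (hbm : b ⊔ m = ⊤) (h : IsCompl (b ⊓ m) w) : IsCompl b (m ⊓ w) := by
  have hm : b ⊓ m ⊔ m ⊓ w = m := by
    rw [inf_comm m w, ← sup_inf_assoc_of_le w inf_le_right, h.sup_eq_top, top_inf_eq]
  refine IsCompl.of_eq (by rw [← inf_assoc, h.inf_eq_bot]) ?_
  calc b ⊔ m ⊓ w = b ⊔ (b ⊓ m ⊔ m ⊓ w) := by rw [← sup_assoc, sup_inf_self]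
    _ = ⊤ := by rw [hm, hbm]

section

variable {R : Type*} [Ring R] {N : Type*} [AddCommGroup N] [Module R N]

theorem exists_isCompl_map_subtype_of_disjoint_jacobson {U : Submodule R N} [IsArtinian R U]
    (b : Submodule R U) (hb : Disjoint (b.map U.subtype) (jacobson R N)) :
    ∃ V : Submodule R N, IsCompl (b.map U.subtype) V := by
  induction b using WellFoundedLT.induction with
  | _ b ih =>
  rcases eq_or_ne b ⊥ with rfl | hb0
  · exact ⟨⊤, by simpa using isCompl_bot_top⟩
  obtain ⟨m, hm, hbm⟩ : ∃ m, IsCoatom m ∧ ¬ b.map U.subtype ≤ m := by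
    by_contra! h
    exact hb0 <| map_injective_of_injective U.injective_subtype <|
      (hb.eq_bot_of_le (le_sInf h)).trans (Submodule.map_bot _).symm
  have hsup : b.map U.subtype ⊔ m = ⊤ :=
    hm.2 _ (right_lt_sup.mpr hbm)
  have hmap : (b ⊓ comap U.subtype m).map U.subtype = b.map U.subtype ⊓ m := by
    rw [map_inf _ U.injective_subtype, map_comap_subtype, ← inf_assoc,
      inf_eq_left.mpr (map_subtype_le _ _)]
  have hlt : b ⊓ comap U.subtype m < b := inf_lt_left.mpr (by rwa [← map_le_iff_le_comap])
  obtain ⟨W, hW⟩ := ih _ hlt (by rw [hmap]; exact hb.mono_left inf_le_left)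
  rw [hmap] at hW
  exact ⟨m ⊓ W, hW.of_isCompl_inf hsup⟩

theorem jacobson_eq_map_subtype_of_isCompl {B V : Submodule R N} (h : IsCompl B V)
    (hB : jacobson R B = ⊥) : jacobson R N = (jacobson R V).map V.subtype := by
  refine le_antisymm (fun x hx => ?_) (map_jacobson_le _)
  have hxV : x ∈ V := by
    rw [← projectionOnto_apply_eq_zero_iff h, ← mem_bot R, ← hB]
    exact map_jacobson_le _ (mem_map_of_mem hx)
  refine ⟨⟨x, hxV⟩, ?_, rfl⟩
  rw [← projectionOnto_apply_of_mem_left h.symm hxV]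
  exact map_jacobson_le _ (mem_map_of_mem hx)

theorem exists_disjoint_map_subtype_and_le_sup {U : Submodule R N} [IsSemisimpleModule R U]
    (J : Submodule R N) :
    ∃ b : Submodule R U, Disjoint (b.map U.subtype) J ∧ U ≤ b.map U.subtype ⊔ J := by
  obtain ⟨b, hb⟩ := exists_isCompl (comap U.subtype J)
  refine ⟨b, ?_, ?_⟩
  · have := disjoint_map U.injective_subtype hb.symm.disjoint
    rwa [map_comap_subtype, disjoint_iff, ← inf_assoc,
      inf_eq_left.mpr (map_subtype_le U b), ← disjoint_iff] at this
  · have := congrArg (map U.subtype) hb.symm.sup_eq_top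
    rw [Submodule.map_sup, map_comap_subtype, Submodule.map_top, range_subtype] at this
    exact this.ge.trans (sup_le_sup_left inf_le_right _)

theorem isRadSupplementOf_of_isCompl {U B V : Submodule R N} (hBU : B ≤ U)
    (hU : U ≤ B ⊔ jacobson R N) (hBV : IsCompl B V)
    (hJ : jacobson R N = (jacobson R V).map V.subtype) : IsRadSupplementOf R U V := by
  refine ⟨eq_top_iff.mpr (hBV.sup_eq_top ▸ sup_le_sup_right hBU V), ?_⟩
  rintro x ⟨hxU, hxV⟩
  obtain ⟨y, hyB, j, hjJ, rfl⟩ := mem_sup.mp (hU hxU)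
  have hjV : j ∈ V := map_subtype_le V _ (hJ ▸ hjJ)
  have hy : y = 0 := (mem_bot R).mp <| hBV.inf_eq_bot ▸ ⟨hyB, by simpa using V.sub_mem hxV hjV⟩
  rw [hy, zero_add, moduleRad_eq_jacobson, ← hJ]
  exact hjJ

end

/-- Every finitely generated semisimple module is Rad-supplementing. -/
theorem isRadSupplementing_of_fg_semisimple
    (R : Type u) [Ring R] (M : Type v) [AddCommGroup M] [Module R M]
    [IsSemisimpleModule R M] [Module.Finite R M] : IsRadSupplementing R M := by
  intro N f _
  set U := LinearMap.range f
  have : IsSemisimpleModule R U := IsSemisimpleModule.range f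
  have : Module.Finite R U := Module.Finite.range f
  obtain ⟨b, hbJ, hU⟩ := exists_disjoint_map_subtype_and_le_sup (U := U) (jacobson R N)
  obtain ⟨V, hbV⟩ := exists_isCompl_map_subtype_of_disjoint_jacobson b hbJ
  have hRadB : jacobson R (b.map U.subtype) = ⊥ :=
    jacobson_eq_bot_of_injective _
      (equivMapOfInjective U.subtype U.injective_subtype b).symm.injective
      (IsSemisimpleModule.jacobson_eq_bot R b)
  exact ⟨V, isRadSupplementOf_of_isCompl (map_subtype_le U b) hU hbV
    (jacobson_eq_map_subtype_of_isCompl hbV hRadB)⟩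
end

section
/- Let R be a commutative Von Neumann regular ring. Then an R-module M is Rad-supplementing if and only if M is injective. -/
/-!
Over a commutative von Neumann regular ring every module has zero radical. Indeed `Rad M ≤ J • M`
for each maximal ideal `J`, since `M ⧸ J • M` is a vector space over `R ⧸ J`; and if `m ∈ J • M`
then `e • m = m` for some `e ∈ J`, so `1 - e` annihilates `m`. A nonzero `m` therefore escapes
`J • M` for any maximal `J` containing its annihilator.

With zero radicals, a Rad-supplement is just a direct complement, so `M` is Rad-supplementing
iff every embedding of `M` splits. That is injectivity: an extension problem `X ↪ Y`, `X → M` is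
solved by splitting the embedding of `M` into the pushout of `X ↪ Y` along `X → M`.
-/

universe u v

open LinearMap

section Splitting

variable {R : Type*} [Ring R] {M : Type v} [AddCommGroup M] [Module R M]

theorem LinearMap.isCompl_range_ker_of_comp_eq_id {N : Type*} [AddCommGroup N] [Module R N]
    {i : M →ₗ[R] N} {r : N →ₗ[R] M} (h : r ∘ₗ i = id) : IsCompl (range i) (ker r) := by
  have hidem : IsIdempotentElem (i ∘ₗ r) := by
    rw [IsIdempotentElem, Module.End.mul_eq_comp, comp_assoc, ← comp_assoc r, h, id_comp]
  have hri : Function.LeftInverse r i := fun m ↦ congr($h m)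
  have hr : Function.Surjective r := hri.surjective
  have hi : Function.Injective i := hri.injective
  simpa [range_comp_of_range_eq_top, range_eq_top.2 hr, ker_comp_of_ker_eq_bot, ker_eq_bot.2 hi]
    using hidem.isCompl

theorem Module.Injective.exists_isCompl_range (hM : Module.Injective R M) {N : Type v}
    [AddCommGroup N] [Module R N] {i : M →ₗ[R] N} (hi : Function.Injective i) :
    ∃ V : Submodule R N, IsCompl (range i) V := by
  obtain ⟨r, hr⟩ := hM.out i hi id
  exact ⟨ker r, isCompl_range_ker_of_comp_eq_id (LinearMap.ext hr)⟩

namespace LinearMap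

variable {X Y : Type*} [AddCommGroup X] [Module R X] [AddCommGroup Y] [Module R Y]
  (f : X →ₗ[R] Y) (g : X →ₗ[R] M)

abbrev pushout := (M × Y) ⧸ range (g.prod (-f))

def pushoutInl : M →ₗ[R] pushout f g := (range (g.prod (-f))).mkQ ∘ₗ inl R M Y

def pushoutInr : Y →ₗ[R] pushout f g := (range (g.prod (-f))).mkQ ∘ₗ inr R M Y

theorem pushoutInr_comp : pushoutInr f g ∘ₗ f = pushoutInl f g ∘ₗ g := by
  ext x
  refine (Submodule.Quotient.eq _).2 ⟨-x, ?_⟩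
  simp

theorem pushoutInl_injective (hf : Function.Injective f) : Function.Injective (pushoutInl f g) := by
  rw [← ker_eq_bot, eq_bot_iff]
  intro m hm
  obtain ⟨x, hx⟩ := (Submodule.Quotient.mk_eq_zero _).1 hm
  have hx0 : x = 0 := hf (by simpa using congr(($hx).2))
  simpa [hx0] using congr(($hx).1).symm

end LinearMap

theorem Module.injective_of_forall_exists_isCompl_range
    (h : ∀ (N : Type v) [AddCommGroup N] [Module R N] (i : M →ₗ[R] N),
      Function.Injective i → ∃ V : Submodule R N, IsCompl (range i) V) :
    Module.Injective R M where
  out X Y _ _ _ _ f hf g := by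
    have hinl := pushoutInl_injective f g hf
    obtain ⟨V, hV⟩ := h _ (pushoutInl f g) hinl
    refine ⟨linearProjOfIsCompl V _ hinl hV ∘ₗ pushoutInr f g, fun x ↦ ?_⟩
    rw [comp_apply, ← comp_apply (pushoutInr f g), pushoutInr_comp, comp_apply,
      linearProjOfIsCompl_apply_left]

end Splitting

section Radical

variable {R : Type*} [CommRing R] {M : Type*} [AddCommGroup M] [Module R M]

theorem Module.jacobson_le_smul_top (J : Ideal R) [J.IsMaximal] :
    Module.jacobson R M ≤ J • ⊤ := by
  let := Ideal.Quotient.field J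
  have : IsSemisimpleModule R (M ⧸ J • (⊤ : Submodule R M)) := by
    rw [isSemisimpleModule_iff, ← (Submodule.orderIsoOfAlgebraMapSurjective
      (S := R ⧸ J) Ideal.Quotient.mk_surjective).complementedLattice_iff]
    exact (isSemisimpleModule_iff _ _).1 inferInstance
  exact Module.jacobson_le_of_eq_bot (IsSemisimpleModule.jacobson_eq_bot R _)

theorem exists_smul_eq_self_of_mem_smul_top (hvnr : ∀ a : R, ∃ x : R, a = a * x * a)
    (I : Ideal R) {m : M} (hm : m ∈ I • (⊤ : Submodule R M)) : ∃ e ∈ I, e • m = m := by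
  refine Submodule.smul_induction_on hm (fun a ha n _ ↦ ?_) ?_
  · obtain ⟨x, hx⟩ := hvnr a
    exact ⟨a * x, I.mul_mem_right x ha, by rw [smul_smul, ← hx]⟩
  · rintro m₁ m₂ ⟨e₁, he₁, h₁⟩ ⟨e₂, he₂, h₂⟩
    -- `e₁ + e₂ - e₁ e₂` acts as the identity wherever `e₁` or `e₂` does
    refine ⟨e₁ + e₂ - e₁ * e₂, I.sub_mem (I.add_mem he₁ he₂) (I.mul_mem_right e₂ he₁), ?_⟩
    have h₁' : (e₁ + e₂ - e₁ * e₂) • m₁ = m₁ := by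
      rw [sub_smul, add_smul, mul_comm, mul_smul, h₁]; abel
    have h₂' : (e₁ + e₂ - e₁ * e₂) • m₂ = m₂ := by
      rw [sub_smul, add_smul, mul_smul, h₂]; abel
    rw [smul_add, h₁', h₂']

theorem eq_zero_of_forall_isMaximal_mem_smul_top (hvnr : ∀ a : R, ∃ x : R, a = a * x * a)
    {m : M} (h : ∀ J : Ideal R, J.IsMaximal → m ∈ J • (⊤ : Submodule R M)) : m = 0 := by
  by_contra hm
  have hann : ker (toSpanSingleton R M m) ≠ ⊤ := fun htop ↦
    hm (by simpa using (htop ▸ Submodule.mem_top : (1 : R) ∈ ker (toSpanSingleton R M m)))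
  obtain ⟨J, hJ, hannJ⟩ := Ideal.exists_le_maximal _ hann
  obtain ⟨e, heJ, hem⟩ := exists_smul_eq_self_of_mem_smul_top hvnr J (h J hJ)
  have h1e : 1 - e ∈ J := hannJ (by simp [sub_smul, hem])
  exact hJ.ne_top ((Ideal.eq_top_iff_one J).2 (by simpa using J.add_mem h1e heJ))

theorem moduleRad_eq_bot_of_vonNeumannRegular (hvnr : ∀ a : R, ∃ x : R, a = a * x * a)
    (M : Type*) [AddCommGroup M] [Module R M] : moduleRad R M = ⊥ :=
  eq_bot_iff.2 fun _ hm ↦ (Submodule.mem_bot R).2 <|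
    eq_zero_of_forall_isMaximal_mem_smul_top hvnr fun J _ ↦ Module.jacobson_le_smul_top J hm

end Radical

section RadSupplement

variable {R : Type*} [Ring R] {N : Type*} [AddCommGroup N] [Module R N] {U V : Submodule R N}

theorem IsCompl.isRadSupplementOf (h : IsCompl U V) : IsRadSupplementOf R U V :=
  ⟨h.sup_eq_top, h.inf_eq_bot ▸ bot_le⟩

theorem IsRadSupplementOf.isCompl (h : IsRadSupplementOf R U V) (hV : moduleRad R V = ⊥) :
    IsCompl U V :=
  ⟨disjoint_iff.2 <| eq_bot_iff.2 <| h.2.trans (by rw [hV, Submodule.map_bot]),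
    codisjoint_iff.2 h.1⟩

end RadSupplement

/-- Over a commutative Von Neumann regular ring, a module is Rad-supplementing
iff it is injective. -/
theorem isRadSupplementing_iff_injective_of_vonNeumannRegular
    (R : Type u) [CommRing R] (hvnr : ∀ a : R, ∃ x : R, a = a * x * a)
    (M : Type v) [AddCommGroup M] [Module R M] :
    IsRadSupplementing R M ↔ Module.Injective R M := by
  constructor
  · intro hM
    refine Module.injective_of_forall_exists_isCompl_range fun N _ _ i hi ↦ ?_
    obtain ⟨V, hV⟩ := hM (ModuleCat.of R N) i hi
    exact ⟨V, hV.isCompl (moduleRad_eq_bot_of_vonNeumannRegular hvnr V)⟩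
  · intro hM N i hi
    obtain ⟨V, hV⟩ := hM.exists_isCompl_range hi
    exact ⟨V, hV.isRadSupplementOf⟩
end

section
/- If M is a reduced, projective, Rad-supplementing left R-module, then Rad M is small in M. -/
universe u v

/-! If `Rad M + T = M`, projectivity of `M` splits the identity as `t + r` with `t M ≤ T` and
`r M ≤ Rad M`. The direct limit `L` of `M →r M →r ⋯` is radical, since each element comes from
the image of `r`, and `m ↦ (t m, [m])` embeds `M` into `M × L` with the image and `Rad (M × L)`
together spanning everything. A Rad-supplement `V` of the image is then radical, so its
projection to `M` is a radical submodule, hence zero; therefore `M = t M ≤ T`. -/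

open Module Submodule

section Radical

variable {R : Type u} [Ring R] {M : Type*} [AddCommGroup M] [Module R M]

variable (R M) in
theorem moduleRad_eq_jacobson_s12 : moduleRad R M = jacobson R M :=
  rfl

theorem Module.jacobson_eq_top_of_surjective {N : Type*} [AddCommGroup N] [Module R N]
    {f : M →ₗ[R] N} (hf : Function.Surjective f) (hM : jacobson R M = ⊤) :
    jacobson R N = ⊤ := by
  rw [eq_top_iff, ← LinearMap.range_eq_top.2 hf, LinearMap.range_eq_map, ← hM]
  exact map_jacobson_le f

theorem Module.jacobson_quotient_eq_top {U : Submodule R M} (hU : U ⊔ jacobson R M = ⊤) :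
    jacobson R (M ⧸ U) = ⊤ := by
  rw [eq_top_iff, ← (map_mkQ_eq_top U _).2 hU]
  exact map_jacobson_le U.mkQ

/-- `V → M ⧸ U` is onto with kernel `U ⊓ V ≤ Rad V`, and the radical lifts along such maps. -/
theorem IsRadSupplementOf.jacobson_eq_top {U V : Submodule R M} (hV : IsRadSupplementOf R U V)
    (hU : U ⊔ jacobson R M = ⊤) : jacobson R V = ⊤ := by
  have hsurj : Function.Surjective (U.mkQ ∘ₗ V.subtype) := by
    rw [← LinearMap.range_eq_top, LinearMap.range_comp, range_subtype, map_mkQ_eq_top, hV.1]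
  have hker : LinearMap.ker (U.mkQ ∘ₗ V.subtype) ≤ jacobson R V := by
    intro v hv
    rw [LinearMap.ker_comp, ker_mkQ, mem_comap] at hv
    obtain ⟨w, hw, hwv⟩ := hV.2 ⟨hv, v.2⟩
    rwa [← V.injective_subtype hwv]
  rw [← comap_jacobson_of_ker_le hsurj hker, jacobson_quotient_eq_top hU, comap_top]

theorem range_prod_sup_jacobson_eq_top {L : Type*} [AddCommGroup L] [Module R L]
    {t r : M →ₗ[R] M} (htr : t + r = LinearMap.id) (hr : LinearMap.range r ≤ jacobson R M)
    (hL : jacobson R L = ⊤) (g : M →ₗ[R] L) :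
    LinearMap.range (t.prod g) ⊔ jacobson R (M × L) = ⊤ := by
  refine eq_top_iff.2 fun ⟨x, c⟩ _ ↦
    mem_sup.2 ⟨t.prod g x, LinearMap.mem_range_self _ x, (r x, c - g x), ?_, ?_⟩
  · have hfst : (r x, (0 : L)) ∈ jacobson R (M × L) :=
      map_jacobson_le (LinearMap.inl R M L) (mem_map_of_mem (hr (LinearMap.mem_range_self r x)))
    have hsnd : ((0 : M), c - g x) ∈ jacobson R (M × L) :=
      map_jacobson_le (LinearMap.inr R M L) (mem_map_of_mem (hL ▸ mem_top))
    simpa using add_mem hfst hsnd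
  · ext
    · simpa using LinearMap.congr_fun htr x
    · simp

end Radical

theorem Module.Projective.exists_add_eq_id_of_sup_eq_top {R : Type*} [Ring R] {M : Type*}
    [AddCommGroup M] [Module R M] [Module.Projective R M] {A B : Submodule R M} (h : A ⊔ B = ⊤) :
    ∃ t r : M →ₗ[R] M, t + r = LinearMap.id ∧ LinearMap.range t ≤ A ∧ LinearMap.range r ≤ B := by
  have hsurj : Function.Surjective (A.subtype.coprod B.subtype) := by
    rw [← LinearMap.range_eq_top, LinearMap.range_coprod, range_subtype, range_subtype, h]
  obtain ⟨g, hg⟩ := projective_lifting_property _ LinearMap.id hsurj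
  refine ⟨A.subtype ∘ₗ LinearMap.fst R A B ∘ₗ g, B.subtype ∘ₗ LinearMap.snd R A B ∘ₗ g,
    ?_, ?_, ?_⟩
  · rw [← hg]; ext; simp
  · rw [LinearMap.range_comp]; exact LinearMap.map_le_range.trans (range_subtype _).le
  · rw [LinearMap.range_comp]; exact LinearMap.map_le_range.trans (range_subtype _).le

section IterateLimit

variable {R : Type*} [Ring R] {M : Type*} [AddCommGroup M] [Module R M] (r : M →ₗ[R] M)

def iterateSystem (i j : ℕ) (_ : i ≤ j) : M →ₗ[R] M :=
  r ^ (j - i)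

instance : DirectedSystem (fun _ : ℕ ↦ M) (iterateSystem r · · ·) where
  map_self _ _ := by simp [iterateSystem]
  map_map k j i hij hjk x := by
    simp only [iterateSystem, ← Module.End.mul_apply, ← pow_add]
    congr 2
    omega

abbrev IterateLimit : Type _ :=
  Module.DirectLimit (fun _ : ℕ ↦ M) (iterateSystem r)

noncomputable abbrev IterateLimit.of (i : ℕ) : M →ₗ[R] IterateLimit r :=
  DirectLimit.of R ℕ (fun _ ↦ M) (iterateSystem r) i

namespace IterateLimit

variable {r}

theorem exists_pow_apply_eq_zero {i : ℕ} {x : M} (hx : of r i x = 0) : ∃ n, (r ^ n) x = 0 :=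
  let ⟨_, _, h⟩ := DirectLimit.of.zero_exact hx
  ⟨_, h⟩

theorem of_apply_eq_of_succ (i : ℕ) (x : M) : of r i x = of r (i + 1) (r x) := by
  rw [← DirectLimit.of_f (hij := i.le_succ)]
  simp [iterateSystem]

theorem jacobson_eq_top (hr : LinearMap.range r ≤ jacobson R M) :
    jacobson R (IterateLimit r) = ⊤ := by
  refine eq_top_iff.2 fun z _ ↦ ?_
  obtain ⟨i, x, rfl⟩ := DirectLimit.exists_of z
  rw [of_apply_eq_of_succ]
  exact map_jacobson_le _ (mem_map_of_mem (hr (LinearMap.mem_range_self r x)))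

/-- If `t m = 0` then `m = r m = rⁿ m` for every `n`, and some `rⁿ m` vanishes once `m` dies in
the limit. -/
theorem injective_prod_of {t : M →ₗ[R] M} (htr : t + r = LinearMap.id) :
    Function.Injective (t.prod (of r 0)) := by
  rw [← LinearMap.ker_eq_bot, LinearMap.ker_prod, eq_bot_iff]
  rintro m ⟨htm, hm⟩
  have hrm : r m = m := by
    simpa [LinearMap.mem_ker.1 htm] using LinearMap.congr_fun htr m
  have hpow (n : ℕ) : (r ^ n) m = m := by
    induction n with
    | zero => rfl
    | succ n ih => rw [pow_succ, Module.End.mul_apply, hrm, ih]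
  obtain ⟨n, hn⟩ := exists_pow_apply_eq_zero hm
  exact (hpow n).symm.trans hn

end IterateLimit

end IterateLimit

/-- A reduced, projective, Rad-supplementing module has small radical. -/
theorem rad_small_of_reduced_projective_radSupplementing
    (R : Type u) [Ring R] (M : Type v) [AddCommGroup M] [Module R M]
    [Module.Projective R M]
    (hred : ∀ U : Submodule R M, moduleRad R U = ⊤ → U = ⊥)
    (h : IsRadSupplementing R M) :
    ∀ T : Submodule R M, T ≠ ⊤ → moduleRad R M ⊔ T ≠ ⊤ := by
  intro T hT hsup
  rw [moduleRad_eq_jacobson_s12, sup_comm] at hsup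
  obtain ⟨t, r, htr, ht, hr⟩ := Module.Projective.exists_add_eq_id_of_sup_eq_top hsup
  obtain ⟨V, hV⟩ := h (ModuleCat.of R (M × IterateLimit r)) _ (IterateLimit.injective_prod_of htr)
  have hVrad : jacobson R V = ⊤ :=
    hV.jacobson_eq_top (range_prod_sup_jacobson_eq_top htr hr (IterateLimit.jacobson_eq_top hr) _)
  have hfst : V.map (LinearMap.fst R M (IterateLimit r)) = ⊥ :=
    hred _ (jacobson_eq_top_of_surjective (LinearMap.submoduleMap_surjective _ V) hVrad)
  have hrange : LinearMap.range t = ⊤ := by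
    simpa [Submodule.map_sup, hfst, ← LinearMap.range_comp] using
      congrArg (map (LinearMap.fst R M _)) hV.1
  exact hT (eq_top_iff.2 (hrange ▸ ht))
end

section
/- Let R be a commutative ring and M a semisimple pure-injective R-module. Then M is supplementing: M has a supplement in every module containing it. -/
/-!
Let `f : M → N` be the embedding and split `M = A ⊕ B` with `A = f⁻¹(Rad N)`, where
`Rad N = Module.jacobson R N`. The semisimple submodule `f(B)` meets `Rad N` trivially. Each
finitely generated submodule `F` of it is Artinian, so finitely many maximal submodules of `N`
already intersect `F` in `0`; their intersection `L` has semisimple quotient `N / L`, and a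
complement of the image of `F` there pulls back to a complement of `F` in `N`. Hence `f(B)` is
pure in `N`. As a direct summand of `M`, `B` is pure-injective, so `N = f(B) ⊕ V`. Projecting onto
the semisimple `f(B)` kills `Rad N`, so `Rad N ≤ V` and `f(M) ∩ V = f(A) ≤ Rad N`. This
semisimple submodule is small in `V`: if `(f(M) ∩ V) + T = V`, then `N / (T + f(B))` is
semisimple, so `f(M) ∩ V ≤ Rad N ≤ T + f(B)`, which inside `V` means `f(M) ∩ V ≤ T`.
-/

universe u v

/-- `V` is a supplement of `U`: `U + V = ⊤` and `U ⊓ V` is small in `V`. -/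
def IsSupplementOf (R : Type u) [Ring R] {N : Type v} [AddCommGroup N] [Module R N]
    (U V : Submodule R N) : Prop :=
  U ⊔ V = ⊤ ∧ ∀ T : Submodule R N, T ≤ V → (U ⊓ V) ⊔ T = V → T = V

/-- `M` is supplementing: it has a supplement in every module containing it. -/
def IsSupplementing (R : Type u) [Ring R] (M : Type v) [AddCommGroup M] [Module R M] :
    Prop :=
  ∀ (N : ModuleCat.{v} R) (f : M →ₗ[R] N), Function.Injective f →
    ∃ V : Submodule R N, IsSupplementOf R (LinearMap.range f) V

/-- `M` is pure-injective: its image is a direct summand in every pure extension,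
where an embedding `f : M → N` is pure if `Q ⊗ f` is injective for every module `Q`. -/
def IsPureInjective (R : Type u) [CommRing R] (M : Type v) [AddCommGroup M]
    [Module R M] : Prop :=
  ∀ (N : ModuleCat.{v} R) (f : M →ₗ[R] N), Function.Injective f →
    (∀ (Q : ModuleCat.{v} R), Function.Injective (LinearMap.lTensor (Q : Type v) f)) →
    ∃ W : Submodule R N, IsCompl (LinearMap.range f) W

open Module Submodule LinearMap TensorProduct

section Complements

variable {R : Type*} [Ring R] {N N' : Type*} [AddCommGroup N] [Module R N]
  [AddCommGroup N'] [Module R N']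

theorem Submodule.isCompl_comap_of_isCompl_map (π : N →ₗ[R] N') {F : Submodule R N}
    {C : Submodule R N'} (hF : Disjoint F (ker π)) (h : IsCompl (F.map π) C) :
    IsCompl F (C.comap π) := by
  constructor
  · rw [disjoint_def]
    intro x hxF hxC
    have hx : π x ∈ F.map π ⊓ C := ⟨mem_map_of_mem hxF, hxC⟩
    rw [h.inf_eq_bot, mem_bot] at hx
    exact disjoint_def.mp hF x hxF hx
  · rw [codisjoint_iff, eq_top_iff]
    intro x _
    obtain ⟨_, ⟨y, hyF, rfl⟩, c, hc, hyc⟩ :=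
      mem_sup.mp (h.sup_eq_top ▸ mem_top : π x ∈ F.map π ⊔ C)
    have hxy : x - y ∈ C.comap π := by
      rw [mem_comap, map_sub, ← hyc, add_sub_cancel_left]
      exact hc
    simpa using add_mem (mem_sup_left hyF) (mem_sup_right hxy)

theorem Submodule.isCompl_map_of_isCompl_comap {π : N →ₗ[R] N'} (hπ : Function.Surjective π)
    {U : Submodule R N'} {W : Submodule R N} (h : IsCompl (U.comap π) W) :
    IsCompl U (W.map π) := by
  constructor
  · rw [disjoint_def]
    rintro _ hx ⟨w, hw, rfl⟩
    have hw' : w ∈ U.comap π ⊓ W := ⟨hx, hw⟩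
    rw [h.inf_eq_bot, mem_bot] at hw'
    rw [hw', map_zero]
  · rw [codisjoint_iff, ← map_comap_eq_of_surjective hπ U, ← map_sup, h.sup_eq_top, map_top,
      range_eq_top.mpr hπ]

theorem Submodule.exists_disjoint_isSemisimpleModule_quotient (F : Submodule R N)
    [IsArtinian R F] (h : Disjoint F (jacobson R N)) :
    ∃ L : Submodule R N, Disjoint F L ∧ IsSemisimpleModule R (N ⧸ L) := by
  -- `F` is Artinian, so finitely many maximal submodules cut it down as far as all of them do.
  obtain ⟨t, ht⟩ :=
    Finset.exists_inf_le fun m : {m : Submodule R N // IsCoatom m} ↦ m.1.comap F.subtype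
  have (m : t) : IsSimpleModule R (N ⧸ m.1.1) := isSimpleModule_iff_isCoatom.mpr m.1.2
  refine ⟨⨅ m : t, m.1.1, disjoint_def.mpr fun x hxF hxL ↦ ?_, ?_⟩
  · have hx : (⟨x, hxF⟩ : F) ∈ t.inf fun m ↦ m.1.comap F.subtype :=
      mem_finsetInf.mpr fun m hm ↦ (mem_iInf _).mp hxL ⟨m, hm⟩
    refine disjoint_def.mp h x hxF (mem_sInf.mpr fun m hm ↦ ?_)
    exact ht ⟨m, hm⟩ hx
  · let φ : N →ₗ[R] Π m : t, N ⧸ m.1.1 := LinearMap.pi fun m ↦ m.1.1.mkQ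
    have hφ : ⨅ m : t, m.1.1 = ker φ := by
      simp [φ, ker_pi]
    exact .of_injective _ (ker_eq_bot.mp (ker_liftQ_eq_bot' _ φ hφ))

theorem Submodule.isComplemented_of_disjoint_jacobson (F : Submodule R N) [IsArtinian R F]
    (h : Disjoint F (jacobson R N)) : IsComplemented F := by
  obtain ⟨L, hFL, _⟩ := F.exists_disjoint_isSemisimpleModule_quotient h
  obtain ⟨C, hC⟩ := ComplementedLattice.exists_isCompl (F.map L.mkQ)
  exact ⟨_, isCompl_comap_of_isCompl_map L.mkQ (by rwa [ker_mkQ]) hC⟩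

end Complements

section Purity

variable {R : Type*} [CommRing R] {N P Q : Type*} [AddCommGroup N] [Module R N]
  [AddCommGroup P] [Module R P] [AddCommGroup Q] [Module R Q]

theorem LinearMap.lTensor_injective_of_forall_finite_isComplemented (g : P →ₗ[R] N)
    (hg : Function.Injective g)
    (h : ∀ P' : Submodule R P, Module.Finite R P' → IsComplemented (P'.map g)) :
    Function.Injective (g.lTensor Q) := by
  refine (injective_iff_map_eq_zero _).mpr fun x hx ↦ ?_
  obtain ⟨P', hP', hxP'⟩ :=
    exists_finite_submodule_right_of_setFinite {x} (Set.finite_singleton x)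
  obtain ⟨y, rfl⟩ := hxP' rfl
  set i := g ∘ₗ P'.subtype
  have hi : Function.Injective i := hg.comp P'.injective_subtype
  obtain ⟨C, hC⟩ := h P' hP'
  rw [← range_subtype P', ← range_comp] at hC
  have hri : linearProjOfIsCompl C i hi hC ∘ₗ i = LinearMap.id :=
    LinearMap.ext (linearProjOfIsCompl_apply_left C i hi hC)
  have hy : y = 0 := calc
    y = (linearProjOfIsCompl C i hi hC ∘ₗ i).lTensor Q y := by rw [hri, lTensor_id, id_apply]
    _ = (linearProjOfIsCompl C i hi hC).lTensor Q (g.lTensor Q (P'.subtype.lTensor Q y)) := by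
      rw [lTensor_comp, lTensor_comp]; rfl
    _ = 0 := by rw [hx, map_zero]
  rw [hy, map_zero]

theorem LinearMap.lTensor_injective_of_disjoint_jacobson [IsSemisimpleModule R P]
    (g : P →ₗ[R] N) (hg : Function.Injective g) (h : Disjoint (range g) (jacobson R N)) :
    Function.Injective (g.lTensor Q) := by
  refine g.lTensor_injective_of_forall_finite_isComplemented hg fun P' _ ↦ ?_
  have : IsArtinian R (P'.map g) := isArtinian_of_linearEquiv (P'.equivMapOfInjective g hg)
  exact (P'.map g).isComplemented_of_disjoint_jacobson (h.mono_left (map_le_range))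

end Purity

section ProdMap

variable {R : Type*} [CommRing R] {M₁ M₂ N₁ N₂ Q : Type*}
  [AddCommGroup M₁] [Module R M₁] [AddCommGroup M₂] [Module R M₂]
  [AddCommGroup N₁] [Module R N₁] [AddCommGroup N₂] [Module R N₂]
  [AddCommGroup Q] [Module R Q]

theorem LinearMap.lTensor_prodMap_injective {f : M₁ →ₗ[R] N₁} {g : M₂ →ₗ[R] N₂}
    (hf : Function.Injective (f.lTensor Q)) (hg : Function.Injective (g.lTensor Q)) :
    Function.Injective ((f.prodMap g).lTensor Q) := by
  have hcomm : (prodRight R R Q N₁ N₂).toLinearMap ∘ₗ (f.prodMap g).lTensor Q =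
      (f.lTensor Q).prodMap (g.lTensor Q) ∘ₗ (prodRight R R Q M₁ M₂).toLinearMap := by
    ext <;> simp
  have hinj : Function.Injective
      ((prodRight R R Q N₁ N₂).toLinearMap ∘ₗ (f.prodMap g).lTensor Q) := by
    rw [hcomm]
    exact (hf.prodMap hg).comp (prodRight R R Q M₁ M₂).injective
  exact Function.Injective.of_comp (f := prodRight R R Q N₁ N₂) hinj

end ProdMap

theorem IsPureInjective.of_isCompl {R : Type u} [CommRing R] {M : Type v} [AddCommGroup M]
    [Module R M] (h : IsPureInjective R M) {A B : Submodule R M} (hAB : IsCompl A B) :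
    IsPureInjective R A := by
  intro N j hj hpure
  let g : M →ₗ[R] N × B :=
    j.prodMap LinearMap.id ∘ₗ (prodEquivOfIsCompl A B hAB).symm.toLinearMap
  have hg : Function.Injective g :=
    (hj.prodMap Function.injective_id).comp (prodEquivOfIsCompl A B hAB).symm.injective
  have hgpure (Q : ModuleCat.{v} R) : Function.Injective (g.lTensor Q) := by
    rw [lTensor_comp]
    have hid : Function.Injective ((LinearMap.id : B →ₗ[R] B).lTensor Q) := by
      rw [lTensor_id]; exact Function.injective_id
    exact (lTensor_prodMap_injective (hpure Q) hid).comp (LinearEquiv.lTensor Q _).injective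
  obtain ⟨W, hW⟩ := h (.of R (N × B)) g hg hgpure
  have hrange : range g = (range j).comap (LinearMap.fst R N B) := by
    rw [range_comp_of_range_eq_top _ (LinearEquiv.range _), range_prodMap, range_id, comap_fst]
  exact ⟨_, isCompl_map_of_isCompl_comap fst_surjective (hrange ▸ hW)⟩

section Supplements

variable {R : Type*} [Ring R] {N : Type*} [AddCommGroup N] [Module R N]

theorem Submodule.jacobson_le_of_isCompl {M₁ V : Submodule R N} [IsSemisimpleModule R M₁]
    (h : IsCompl M₁ V) : jacobson R N ≤ V :=
  (IsSemisimpleModule.jacobson_le_ker R R N M₁ (M₁.projectionOnto V h)).trans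
    (ker_projectionOnto h).le

theorem Submodule.jacobson_le_of_codisjoint {K S : Submodule R N} [IsSemisimpleModule R K]
    (h : Codisjoint K S) : jacobson R N ≤ S := by
  have hsurj : Function.Surjective (S.mkQ ∘ₗ K.subtype) := by
    rw [← range_eq_top, range_comp, range_subtype,
      ← (comap_injective_of_surjective S.mkQ_surjective).eq_iff, comap_map_mkQ, comap_top,
      sup_comm, h.eq_top]
  have : IsSemisimpleModule R (N ⧸ S) := .of_surjective _ hsurj
  simpa using IsSemisimpleModule.jacobson_le_ker R R N (N ⧸ S) S.mkQ

theorem isSupplementOf_of_isCompl {U V M₁ : Submodule R N} [IsSemisimpleModule R U]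
    (hM₁V : IsCompl M₁ V) (hM₁U : M₁ ≤ U) (hUV : U ⊓ V ≤ jacobson R N) :
    IsSupplementOf R U V := by
  refine ⟨top_le_iff.mp (hM₁V.sup_eq_top ▸ sup_le_sup_right hM₁U V), fun T hTV hT ↦ ?_⟩
  have : IsSemisimpleModule R ↥(U ⊓ V) :=
    .of_injective (inclusion inf_le_left) (inclusion_injective _)
  have hcodisj : Codisjoint (U ⊓ V) (T ⊔ M₁) := by
    rw [codisjoint_iff, ← sup_assoc, hT, sup_comm, hM₁V.sup_eq_top]
  have hUVT : U ⊓ V ≤ T := calc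
    U ⊓ V ≤ (T ⊔ M₁) ⊓ V :=
      le_inf (hUV.trans (jacobson_le_of_codisjoint hcodisj)) inf_le_right
    _ = T := by rw [sup_inf_assoc_of_le M₁ hTV, hM₁V.inf_eq_bot, sup_bot_eq]
  exact le_antisymm hTV (hT ▸ sup_le hUVT le_rfl)

end Supplements

/-- Over a commutative ring, a semisimple pure-injective module is supplementing. -/
theorem isSupplementing_of_semisimple_pureInjective
    (R : Type u) [CommRing R] (M : Type v) [AddCommGroup M] [Module R M]
    [IsSemisimpleModule R M] (h : IsPureInjective R M) :
    IsSupplementing R M := by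
  intro N f hf
  obtain ⟨B, hAB⟩ := ComplementedLattice.exists_isCompl ((jacobson R N).comap f)
  set j := f ∘ₗ B.subtype
  have hj : Function.Injective j := hf.comp B.injective_subtype
  have hdisj : Disjoint (range j) (jacobson R N) := by
    rw [disjoint_def]
    rintro _ ⟨b, rfl⟩ hb
    have hb0 : (b : M) ∈ (jacobson R N).comap f ⊓ B := ⟨hb, b.2⟩
    rw [hAB.inf_eq_bot, mem_bot] at hb0
    simp [j, hb0]
  have : IsSemisimpleModule R (range j) := .range j
  have : IsSemisimpleModule R (range f) := .range f
  obtain ⟨V, hV⟩ := h.of_isCompl hAB.symm N j hj fun _ ↦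
    j.lTensor_injective_of_disjoint_jacobson hj hdisj
  have hrange : range f = ((jacobson R N).comap f).map f ⊔ range j := by
    rw [range_comp, range_subtype, ← Submodule.map_sup, hAB.sup_eq_top, Submodule.map_top]
  have hUV : range f ⊓ V ≤ jacobson R N := by
    rw [hrange, sup_inf_assoc_of_le _ ((map_comap_le f _).trans (jacobson_le_of_isCompl hV)),
      hV.inf_eq_bot, sup_bot_eq]
    exact map_comap_le f _
  exact ⟨V, isSupplementOf_of_isCompl hV (range_comp_le_range B.subtype f) hUV⟩
end

section
/- A module M is ample Rad-supplementing if and only if every submodule of M is Rad-supplementing. -/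
universe u v

/-- `M` is ample Rad-supplementing: in every module `N` containing it, for every
`L` with `M + L = N` there is a Rad-supplement `L' ⊆ L` of `M` in `N`. -/
def IsAmpleRadSupplementing (R : Type u) [Ring R] (M : Type v) [AddCommGroup M]
    [Module R M] : Prop :=
  ∀ (N : ModuleCat.{v} R) (f : M →ₗ[R] N), Function.Injective f →
    ∀ L : Submodule R N, LinearMap.range f ⊔ L = ⊤ →
      ∃ L' : Submodule R N, L' ≤ L ∧ IsRadSupplementOf R (LinearMap.range f) L'

section Aux
variable {R : Type u} [Ring R]

lemma moduleRad_map_equiv_s16 {A : Type*} {B : Type*} [AddCommGroup A] [Module R A]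
    [AddCommGroup B] [Module R B] (e : A ≃ₗ[R] B) :
    Submodule.map (e : A →ₗ[R] B) (moduleRad R A) = moduleRad R B := by
  let o : Submodule R A ≃o Submodule R B := Submodule.orderIsoMapComap e
  have h1 : Submodule.map (e : A →ₗ[R] B) (moduleRad R A) = o (moduleRad R A) := rfl
  have himg : ⇑o '' {m : Submodule R A | IsCoatom m} = {m : Submodule R B | IsCoatom m} := by
    ext m
    simp only [Set.mem_image, Set.mem_setOf_eq]
    constructor
    · rintro ⟨p, hp, rfl⟩
      exact (OrderIso.isCoatom_iff o p).mpr hp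
    · intro hm
      exact ⟨o.symm m, by simpa using (OrderIso.isCoatom_iff o.symm m).mpr hm, by simp⟩
  rw [h1, moduleRad, OrderIso.map_sInf, ← sInf_image, himg, moduleRad]

lemma pushRad {A : Type v} {B : Type v} [AddCommGroup A] [Module R A]
    [AddCommGroup B] [Module R B] (h : A →ₗ[R] B) (hinj : Function.Injective h)
    (P : Submodule R A) :
    Submodule.map (Submodule.map h P).subtype (moduleRad R (Submodule.map h P)) =
      Submodule.map h (Submodule.map P.subtype (moduleRad R P)) := by
  set e := Submodule.equivMapOfInjective h hinj P with he
  have hcomm : (Submodule.map h P).subtype ∘ₗ (e : P →ₗ[R] Submodule.map h P)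
      = h ∘ₗ P.subtype := by
    ext x
    rfl
  rw [← moduleRad_map_equiv_s16 e, ← Submodule.map_comp, hcomm, Submodule.map_comp]

end Aux

/-- `M` is ample Rad-supplementing iff every submodule of `M` is Rad-supplementing. -/
theorem isAmpleRadSupplementing_iff_submodules_radSupplementing
    (R : Type u) [Ring R] (M : Type v) [AddCommGroup M] [Module R M] :
    IsAmpleRadSupplementing R M ↔ ∀ U : Submodule R M, IsRadSupplementing R U := by
  constructor
  · -- (⇒) via the pushout construction
    intro hM U N g hg
    -- W = {(u, -g u)}
    let φ : U →ₗ[R] M × N := U.subtype.prod (-g)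
    let W : Submodule R (M × N) := LinearMap.range φ
    let N' : ModuleCat.{v} R := ModuleCat.of R ((M × N) ⧸ W)
    let q : (M × N) →ₗ[R] ((M × N) ⧸ W) := W.mkQ
    let f' : M →ₗ[R] N' := q ∘ₗ LinearMap.inl R M N
    let h : N →ₗ[R] N' := q ∘ₗ LinearMap.inr R M N
    have memW : ∀ x : M × N, x ∈ W ↔ ∃ u : U, ((u : M), -(g u)) = x := by
      intro x
      constructor
      · rintro ⟨u, rfl⟩; exact ⟨u, rfl⟩
      · rintro ⟨u, rfl⟩; exact ⟨u, rfl⟩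
    have hq0 : ∀ x : M × N, q x = 0 ↔ x ∈ W := by
      intro x
      simp only [q, Submodule.mkQ_apply, Submodule.Quotient.mk_eq_zero]
    have hf' : Function.Injective f' := by
      intro a b hab
      have h0 : f' (a - b) = 0 := by rw [map_sub, hab, sub_self]
      have : ((a - b : M), (0 : N)) ∈ W := (hq0 _).mp h0
      obtain ⟨u, hu⟩ := (memW _).mp this
      have h2 : -(g u) = (0 : N) := congrArg Prod.snd hu
      have hu0 : u = 0 := hg (by simpa using neg_eq_zero.mp h2)
      have : (a - b : M) = 0 := by
        have h1 : ((u : M)) = a - b := congrArg Prod.fst hu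
        rw [← h1, hu0]; simp
      exact sub_eq_zero.mp this
    have hh : Function.Injective h := by
      intro a b hab
      have h0 : h (a - b) = 0 := by rw [map_sub, hab, sub_self]
      have : ((0 : M), (a - b : N)) ∈ W := (hq0 _).mp h0
      obtain ⟨u, hu⟩ := (memW _).mp this
      have h1 : ((u : M)) = (0 : M) := congrArg Prod.fst hu
      have hu0 : u = 0 := Subtype.ext h1
      have h2 : -(g u) = a - b := congrArg Prod.snd hu
      have : (a - b : N) = 0 := by rw [← h2, hu0]; simp
      exact sub_eq_zero.mp this
    have hqsplit : ∀ (m : M) (n : N), q (m, n) = f' m + h n := by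
      intro m n
      have : ((m, n) : M × N) = (m, 0) + (0, n) := by simp
      rw [this, map_add]; rfl
    have hsum : LinearMap.range f' ⊔ LinearMap.range h = ⊤ := by
      rw [Submodule.eq_top_iff']
      intro x
      obtain ⟨⟨m, n⟩, rfl⟩ := Submodule.mkQ_surjective W x
      exact Submodule.mem_sup.mpr ⟨f' m, ⟨m, rfl⟩, h n, ⟨n, rfl⟩, (hqsplit m n).symm⟩
    obtain ⟨L', hL'le, hsup, hrad⟩ := hM N' f' hf' (LinearMap.range h) hsum
    refine ⟨Submodule.comap h L', ?_, ?_⟩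
    · -- range g ⊔ V = ⊤
      rw [Submodule.eq_top_iff']
      intro n
      have : h n ∈ LinearMap.range f' ⊔ L' := by rw [hsup]; trivial
      obtain ⟨y, ⟨m, rfl⟩, l', hl', hyl⟩ := Submodule.mem_sup.mp this
      obtain ⟨v, rfl⟩ := hL'le hl'
      have hvV : v ∈ Submodule.comap h L' := hl'
      have : ((-m : M), (n - v : N)) ∈ W := by
        rw [← hq0]
        have : q ((-m : M), (n - v : N)) = h (n - v) - f' m := by
          have := hqsplit (-m) (n - v)
          rw [this]; simp [map_neg]; abel
        rw [this, map_sub, ← hyl]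
        abel
      obtain ⟨u, hu⟩ := (memW _).mp this
      have h2 : -(g u) = n - v := congrArg Prod.snd hu
      refine Submodule.mem_sup.mpr ⟨g (-u), ⟨-u, rfl⟩, v, hvV, ?_⟩
      rw [map_neg, h2]
      abel
    · -- radical condition
      intro x hx
      obtain ⟨⟨u, hux⟩, hxV⟩ := hx
      have hmapV : Submodule.map h (Submodule.comap h L') = L' := by
        rw [Submodule.map_comap_eq]
        exact inf_eq_right.mpr (le_trans hL'le le_rfl)
      have hxL' : h x ∈ L' := hxV
      have hfx : h x ∈ LinearMap.range f' := by
        refine ⟨(u : M), ?_⟩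
        have hW : (((u : M)), -(g u)) ∈ W := ⟨u, rfl⟩
        have : q (((u : M)), -(g u)) = 0 := (hq0 _).mpr hW
        have h3 : f' (u : M) + h (-(g u)) = 0 := by rw [← hqsplit]; exact this
        have : f' (u : M) = h (g u) := by
          rw [map_neg, ← sub_eq_add_neg] at h3
          exact sub_eq_zero.mp h3
        rw [this, hux]
      have key : h x ∈ Submodule.map L'.subtype (moduleRad R L') := hrad ⟨hfx, hxL'⟩
      rw [← hmapV, pushRad h hh] at key
      obtain ⟨y, hy, hyx⟩ := key
      have : y = x := hh hyx
      rw [← this]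
      exact hy
  · -- (⇐) direction
    intro hsub N f hf L hL
    let U : Submodule R M := Submodule.comap f L
    let g : U →ₗ[R] L := f.restrict (fun x hx => hx)
    have hgval : ∀ u : U, (g u : N) = f (u : M) := fun u => rfl
    have hginj : Function.Injective g := by
      intro a b hab
      apply Subtype.ext
      apply hf
      rw [← hgval a, ← hgval b, hab]
    obtain ⟨V', hV1, hV2⟩ := hsub U (ModuleCat.of R L) g hginj
    refine ⟨Submodule.map L.subtype V', Submodule.map_subtype_le L V', ?_, ?_⟩
    · -- range f ⊔ L' = ⊤
      rw [Submodule.eq_top_iff']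
      intro x
      have hx : x ∈ LinearMap.range f ⊔ L := by rw [hL]; trivial
      obtain ⟨y, ⟨m, rfl⟩, l, hl, rfl⟩ := Submodule.mem_sup.mp hx
      have : (⟨l, hl⟩ : L) ∈ LinearMap.range g ⊔ V' := by rw [hV1]; trivial
      obtain ⟨y', ⟨u, rfl⟩, v', hv', hsum'⟩ := Submodule.mem_sup.mp this
      have hlval : l = f (u : M) + (v' : N) := by
        have := congrArg (L.subtype) hsum'
        simpa [hgval] using this.symm
      refine Submodule.mem_sup.mpr ⟨f (m + (u : M)), ⟨m + (u : M), rfl⟩,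
        (v' : N), ⟨v', hv', rfl⟩, ?_⟩
      rw [map_add, hlval]
      abel
    · -- radical condition
      intro x hx
      obtain ⟨⟨m, hm⟩, hxL'⟩ := hx
      obtain ⟨y, hyV', hyx⟩ := Submodule.mem_map.mp hxL'
      have hyL : L.subtype y ∈ L := y.2
      have hmU : m ∈ U := by
        show f m ∈ L
        rw [hm, ← hyx]; exact hyL
      have hyg : y ∈ LinearMap.range g := by
        refine ⟨⟨m, hmU⟩, ?_⟩
        apply Subtype.ext
        rw [hgval]
        rw [hm]
        exact hyx.symm
      have key : y ∈ Submodule.map V'.subtype (moduleRad R V') := hV2 ⟨hyg, hyV'⟩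
      have := pushRad (R := R) L.subtype (Submodule.injective_subtype L) V'
      rw [this]
      exact Submodule.mem_map.mpr ⟨y, key, hyx⟩
end

section
/- If M/P(M) is Rad-supplementing, then M is Rad-supplementing, where P(M) is the sum of all radical submodules of M. -/
universe u v

/-- `P(M)`: the sum of all radical submodules of `M`. -/
def radicalPart (R : Type u) [Ring R] (M : Type v) [AddCommGroup M] [Module R M] :
    Submodule R M :=
  sSup {U : Submodule R M | moduleRad R U = ⊤}

section Aux
variable {R : Type u} [Ring R]

lemma map_coatom_of_surjective {M₁ : Type*} {M₂ : Type*} [AddCommGroup M₁] [Module R M₁]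
    [AddCommGroup M₂] [Module R M₂] (g : M₁ →ₗ[R] M₂) (hg : Function.Surjective g)
    {m : Submodule R M₁} (hm : IsCoatom m) (hker : LinearMap.ker g ≤ m) :
    IsCoatom (Submodule.map g m) := by
  constructor
  · intro htop
    apply hm.1
    have hcm : Submodule.comap g (Submodule.map g m) = m := by
      rw [Submodule.comap_map_eq, sup_eq_left.mpr hker]
    rw [htop, Submodule.comap_top] at hcm
    exact hcm.symm
  · intro c hc
    have hle : m ≤ Submodule.comap g c := by
      refine le_trans ?_ (Submodule.comap_mono hc.le)
      rw [Submodule.comap_map_eq]; exact le_sup_left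
    have hne : m ≠ Submodule.comap g c := by
      intro he
      have : c = Submodule.map g m := by
        rw [he, Submodule.map_comap_eq_of_surjective hg]
      exact absurd this hc.ne'
    have : c = Submodule.map g (Submodule.comap g c) :=
      (Submodule.map_comap_eq_of_surjective hg c).symm
    rw [this, hm.2 _ (lt_of_le_of_ne hle hne), Submodule.map_top,
      LinearMap.range_eq_top.mpr hg]

lemma moduleRad_eq_top_of_equiv {M₁ : Type*} {M₂ : Type*} [AddCommGroup M₁] [Module R M₁]
    [AddCommGroup M₂] [Module R M₂] (e : M₁ ≃ₗ[R] M₂)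
    (h : moduleRad R M₁ = ⊤) : moduleRad R M₂ = ⊤ := by
  rw [moduleRad, sInf_eq_top] at h ⊢
  intro m hm
  have hco : IsCoatom (Submodule.map (e.symm : M₂ →ₗ[R] M₁) m) := by
    refine map_coatom_of_surjective _ e.symm.surjective hm ?_
    rw [LinearMap.ker_eq_bot.mpr e.symm.injective]; exact bot_le
  exact absurd (h _ hco) hco.1

lemma radical_le_coatom {N : Type*} [AddCommGroup N] [Module R N] {K : Submodule R N}
    (hK : moduleRad R K = ⊤) {m : Submodule R N} (hm : IsCoatom m) : K ≤ m := by
  by_contra hKm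
  have hco : IsCoatom (Submodule.comap K.subtype m) := by
    constructor
    · intro htop
      refine hKm fun x hx => ?_
      have hmem : (⟨x, hx⟩ : K) ∈ (⊤ : Submodule R K) := trivial
      rw [← htop] at hmem
      exact hmem
    · intro c hc
      set c' := Submodule.map K.subtype c with hc'
      have hmapcm : Submodule.map K.subtype (Submodule.comap K.subtype m) = K ⊓ m :=
        Submodule.map_comap_subtype K m
      have hinj := Submodule.map_injective_of_injective (f := K.subtype) K.injective_subtype
      have hlt : K ⊓ m < c' := by
        rw [← hmapcm]
        exact lt_of_le_of_ne (Submodule.map_mono hc.le) (fun he => hc.ne (hinj he))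
      have hc'K : c' ≤ K := Submodule.map_subtype_le K c
      have hsup : m ⊔ c' = ⊤ := by
        have : m < m ⊔ c' := by
          rw [left_lt_sup]
          intro hle
          exact absurd (le_inf hc'K hle) (not_le_of_gt hlt)
        exact hm.2 _ this
      have hKeq : c' = K := by
        have hmod : K ⊓ m ⊔ c' = K ⊓ (m ⊔ c') := inf_sup_assoc_of_le _ hc'K
        rw [hsup, inf_top_eq] at hmod
        rw [← hmod, sup_eq_right.mpr hlt.le]
      have : Submodule.comap K.subtype c' = c := by
        rw [hc', Submodule.comap_map_eq, Submodule.ker_subtype, sup_bot_eq]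
      rw [← this, hKeq, Submodule.comap_subtype_self]
  rw [moduleRad, sInf_eq_top] at hK
  exact hco.1 (hK _ hco)

lemma moduleRad_radicalPart (R : Type u) [Ring R] (M : Type v) [AddCommGroup M] [Module R M] :
    moduleRad R (radicalPart R M) = ⊤ := by
  set P := radicalPart R M with hP
  rw [moduleRad, sInf_eq_top]
  intro m hm
  have key : P ≤ Submodule.map P.subtype m := by
    conv_lhs => rw [hP, radicalPart]
    refine sSup_le fun U hU => ?_
    have hUP : U ≤ P := le_sSup hU
    have hrad : moduleRad R (Submodule.comap P.subtype U) = ⊤ :=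
      moduleRad_eq_top_of_equiv (Submodule.comapSubtypeEquivOfLe hUP).symm hU
    have hle : Submodule.comap P.subtype U ≤ m := radical_le_coatom hrad hm
    intro x hx
    exact ⟨⟨x, hUP hx⟩, hle (by simpa using hx), rfl⟩
  rw [eq_top_iff]
  rintro ⟨x, hx⟩ -
  obtain ⟨z, hz, hzx⟩ := key hx
  have hze : z = ⟨x, hx⟩ := Subtype.ext hzx
  rwa [← hze]

end Aux

/-- If `M / P(M)` is Rad-supplementing, then so is `M`. -/
theorem isRadSupplementing_of_quotient_radicalPart
    (R : Type u) [Ring R] (M : Type v) [AddCommGroup M] [Module R M]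
    (h : IsRadSupplementing R (M ⧸ radicalPart R M)) : IsRadSupplementing R M := by
  intro N f hf
  set P := radicalPart R M with hPdef
  set K := Submodule.map f P with hKdef
  set π := K.mkQ with hπdef
  have hKrad : moduleRad R K = ⊤ :=
    moduleRad_eq_top_of_equiv (Submodule.equivMapOfInjective f hf P)
      (moduleRad_radicalPart R M)
  have hlecomap : P ≤ Submodule.comap f K := Submodule.map_le_iff_le_comap.mp le_rfl
  set g : (M ⧸ P) →ₗ[R] (N ⧸ K) := Submodule.mapQ P K f hlecomap with hgdef
  have hgmk : ∀ x : M, g (P.mkQ x) = π (f x) := fun x => by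
    simp [hgdef, hπdef, Submodule.mapQ_apply]
  have hginj : Function.Injective g := by
    rw [← LinearMap.ker_eq_bot, eq_bot_iff]
    intro x hx
    obtain ⟨mx, rfl⟩ := P.mkQ_surjective x
    rw [LinearMap.mem_ker, hgmk] at hx
    have hfm : f mx ∈ K := by
      rw [hπdef, Submodule.mkQ_apply, Submodule.Quotient.mk_eq_zero] at hx
      exact hx
    obtain ⟨p, hp, hpx⟩ := hfm
    have hmx : mx ∈ P := by rwa [hf hpx] at hp
    simpa [Submodule.Quotient.mk_eq_zero] using hmx
  obtain ⟨V', hV'sup, hV'int⟩ := h (ModuleCat.of R (N ⧸ K)) g hginj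
  set V := Submodule.comap π V' with hVdef
  have hKV : K ≤ V := by
    intro k hk
    show π k ∈ V'
    have : π k = 0 := by
      rw [hπdef, Submodule.mkQ_apply, Submodule.Quotient.mk_eq_zero]; exact hk
    rw [this]; exact V'.zero_mem
  refine ⟨V, ?_, ?_⟩
  · -- sup = ⊤
    rw [eq_top_iff]
    intro x _
    have hx : π x ∈ LinearMap.range g ⊔ V' := by rw [hV'sup]; trivial
    obtain ⟨y, hy, v, hv, hsum⟩ := Submodule.mem_sup.mp hx
    obtain ⟨z, rfl⟩ := hy
    obtain ⟨mz, rfl⟩ := P.mkQ_surjective z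
    have hxv : x - f mz ∈ V := by
      show π (x - f mz) ∈ V'
      have : π (x - f mz) = v := by
        rw [map_sub, ← hgmk, ← hsum]; abel
      rw [this]; exact hv
    exact Submodule.mem_sup.mpr ⟨f mz, ⟨mz, rfl⟩, x - f mz, hxv, by abel⟩
  · -- inf condition
    rintro x ⟨hxr, hxV⟩
    obtain ⟨mx, rfl⟩ := hxr
    have hπmem : π (f mx) ∈ LinearMap.range g ⊓ V' :=
      ⟨⟨P.mkQ mx, hgmk mx⟩, hxV⟩
    obtain ⟨w, hw, hwx⟩ := hV'int hπmem
    -- the restricted quotient map q : V → V'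
    set q : V →ₗ[R] V' :=
      LinearMap.codRestrict V' (π.comp V.subtype) (fun v => v.2) with hqdef
    have hqval : ∀ v : V, (q v).1 = π (v : N) := fun v => rfl
    have hqsurj : Function.Surjective q := by
      intro v'
      obtain ⟨y, hy⟩ := K.mkQ_surjective v'.1
      have hyV : y ∈ V := by
        show K.mkQ y ∈ V'
        rw [hy]; exact v'.2
      exact ⟨⟨y, hyV⟩, Subtype.ext (by rw [hqval]; exact hy)⟩
    have hqker : LinearMap.ker q = Submodule.comap V.subtype K := by
      ext v
      simp only [LinearMap.mem_ker, Submodule.mem_comap]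
      constructor
      · intro hv
        have h0 : π (v : N) = 0 := by rw [← hqval, hv]; rfl
        rwa [hπdef, Submodule.mkQ_apply, Submodule.Quotient.mk_eq_zero] at h0
      · intro hv
        have h0 : π (v : N) = 0 := by
          rw [hπdef, Submodule.mkQ_apply, Submodule.Quotient.mk_eq_zero]; exact hv
        exact Subtype.ext (by rw [hqval v, h0]; rfl)
    have hKVrad : moduleRad R (Submodule.comap V.subtype K) = ⊤ :=
      moduleRad_eq_top_of_equiv (Submodule.comapSubtypeEquivOfLe hKV).symm hKrad
    refine ⟨⟨f mx, hxV⟩, ?_, rfl⟩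
    rw [moduleRad]
    refine Submodule.mem_sInf.mpr fun m hm => ?_
    have hker_le : LinearMap.ker q ≤ m := by
      rw [hqker]; exact radical_le_coatom hKVrad hm
    have hmco : IsCoatom (Submodule.map q m) := map_coatom_of_surjective q hqsurj hm hker_le
    have hqx : q ⟨f mx, hxV⟩ = w := Subtype.ext (by rw [hqval]; exact hwx.symm)
    have hwm : w ∈ Submodule.map q m := by
      have : moduleRad R V' ≤ Submodule.map q m := sInf_le hmco
      exact this hw
    obtain ⟨w₀, hw₀, hww⟩ := hwm
    have hdiff : (⟨f mx, hxV⟩ : V) - w₀ ∈ LinearMap.ker q := by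
      rw [LinearMap.mem_ker, map_sub, hww, hqx, sub_self]
    have : (⟨f mx, hxV⟩ : V) = w₀ + ((⟨f mx, hxV⟩ : V) - w₀) := by abel
    rw [this]
    exact m.add_mem hw₀ (hker_le hdiff)
end
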